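/- arXiv:0803.2294 — 4 statements merged into one kernel-verified Lean document; each statement's English description precedes it below -/
import Mathlib

section
/- Let u, c : [0,∞) → [0,∞) be continuous with c nondecreasing and c(t) > 0 for all t, let α ∈ C¹([0,∞),[0,∞)) be nondecreasing with α(t) ≤ t, let f, g : [0,∞)×[0,∞) → [0,∞) be continuous and nondecreasing in the first variable, let φ : [0,∞) → [0,∞) be a continuous strictly increasing bijection, and let η, w : [0,∞) → [0,∞) be continuous nondecreasing with η(x) > 0 and w(x) > 0 for x > 0, and ∫_{x₀}^∞ ds/η(φ⁻¹(s)) = ∞ for some 0 < x₀ < c(0). Define G(x) = ∫_{x₀}^x ds/η(φ⁻¹(s)), p(t) = G(c(t)) + ∫_0^{α(t)} g(t,s) ds, and Ψ(x) = ∫_{x₁}^x ds/w(φ⁻¹(G⁻¹(s))) for some fixed x₁ > 0. If φ(u(t)) ≤ c(t) + ∫_0^{α(t)} [f(t,s)η(u(s))w(u(s)) + g(t,s)η(u(s))] ds for all t ≥ 0, then there exists τ > 0 such that for all t ∈ [0,τ], the quantity Ψ(p(t)) + ∫_0^{α(t)} f(t,s) ds lies in the domain of Ψ⁻¹ and u(t)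 ≤ φ⁻¹(G⁻¹(Ψ⁻¹(Ψ(p(t)) + ∫_0^{α(t)} f(t,s) ds))). -/
/-!
Fix `t` and let `m(s) = c(t) + ∫₀ˢ k(t,σ) dσ`, where `k` is the integrand of the hypothesis. Since
the kernels increase in `t` and `α(s) ≤ s`, the hypothesis gives `φ(u(s)) ≤ m(s)` for `s ≤ t`, hence
`m' ≤ η(φ⁻¹ m) (f w(φ⁻¹ m) + g)`. Dividing by `η(φ⁻¹ m)` and integrating gives
`G(m) ≤ n := G(c t) + ∫ (f w(φ⁻¹ m) + g)`, i.e. `m ≤ G⁻¹ n`, so that `n' ≤ f ω(n) + g` with the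
nondecreasing `ω = w ∘ φ⁻¹ ∘ G⁻¹`. Dividing by `ω(n)` and integrating once more, and bounding
`g / ω(n) ≤ g / ω(n₀)` with `n₀ = G(c t) + ∫ g ≤ n`, gives `Ψ(n(α t)) ≤ Ψ(p t) + ∫₀^{α t} f`.
Each integration is the substitution `y = m(s)` (or `n(s)`, `n₀(s)`), a primitive of a nonnegative
continuous function.

For `t → 0⁺` the quantity `Ψ(p t) + ∫₀^{α t} f` tends to `Ψ(G(c 0))`, an interior value of the
range of `Ψ`; this gives `τ`.
-/

open Set Filter intervalIntegral MeasureTheory Topology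

lemma MonotoneOn.strictMonoOn_of_rightInvOn {α β : Type*} [LinearOrder α] [Preorder β]
    {f : α → β} {g : β → α} {s : Set α} {t : Set β} (hf : MonotoneOn f s) (hg : MapsTo g t s)
    (hfg : RightInvOn g f t) : StrictMonoOn g t := by
  intro a ha b hb hab
  by_contra! hba
  have := hf (hg hb) (hg ha) hba
  rw [hfg hb, hfg ha] at this
  exact this.not_gt hab

lemma StrictMonoOn.continuousOn_Ici_of_surjOn {g : ℝ → ℝ} {a : ℝ}
    (hg : StrictMonoOn g (Ici a)) (hsurj : SurjOn g (Ici a) (Ici (g a))) :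
    ContinuousOn g (Ici a) := by
  have hsurj' : SurjOn g (Ici a) (Ioi (g a)) := hsurj.mono subset_rfl Ioi_subset_Ici_self
  intro x hx
  rcases (mem_Ici.1 hx).eq_or_lt with rfl | hax
  · exact hg.continuousWithinAt_right_of_surjOn self_mem_nhdsWithin hsurj'
  · exact (hg.continuousAt_of_image_mem_nhds (Ici_mem_nhds hax)
      (mem_of_superset (Ioi_mem_nhds (hg self_mem_Ici hx hax)) hsurj')).continuousWithinAt

lemma antitoneOn_one_div {ω : ℝ → ℝ} {s : Set ℝ} (hω : MonotoneOn ω s)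
    (hpos : ∀ x ∈ s, 0 < ω x) : AntitoneOn (fun x => 1 / ω x) s :=
  fun x hx _ hy hxy => one_div_le_one_div_of_le (hpos x hx) (hω hx hy hxy)

structure IsBihariFunction (w : ℝ → ℝ) : Prop where
  continuousOn : ContinuousOn w (Ici 0)
  monotoneOn : MonotoneOn w (Ici 0)
  pos : ∀ x > 0, 0 < w x

namespace IsBihariFunction

variable {w φ φinv : ℝ → ℝ}

lemma nonneg (hw : IsBihariFunction w) {x : ℝ} (hx : 0 ≤ x) : 0 ≤ w x := by
  rcases hx.eq_or_lt with rfl | hx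
  · refine ge_of_tendsto ((hw.continuousOn 0 self_mem_Ici).mono_left
      (nhdsWithin_mono _ Ioi_subset_Ici_self)) ?_
    filter_upwards [self_mem_nhdsWithin] with y hy using (hw.pos y hy).le
  · exact (hw.pos x hx).le

lemma comp (hw : IsBihariFunction w) (hφ : IsBihariFunction φ) :
    IsBihariFunction (fun x => w (φ x)) where
  continuousOn := hw.continuousOn.comp hφ.continuousOn fun _ hx => hφ.nonneg hx
  monotoneOn := hw.monotoneOn.comp hφ.monotoneOn fun _ hx => hφ.nonneg hx
  pos x hx := hw.pos _ (hφ.pos x hx)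

lemma of_inverse (hφ : MonotoneOn φ (Ici 0)) (hφ_bij : BijOn φ (Ici 0) (Ici 0))
    (hleft : ∀ x ≥ 0, φinv (φ x) = x) (hright : ∀ y ≥ 0, φ (φinv y) = y) :
    IsBihariFunction φinv := by
  have hmaps : MapsTo φinv (Ici 0) (Ici 0) := fun y hy => by
    obtain ⟨x, hx, rfl⟩ := hφ_bij.surjOn hy
    rwa [mem_Ici, hleft x hx]
  have hstrict : StrictMonoOn φinv (Ici 0) := hφ.strictMonoOn_of_rightInvOn hmaps hright
  refine ⟨hstrict.continuousOn_Ici_of_surjOn fun z hz => ?_, hstrict.monotoneOn,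
    fun x hx => (hmaps self_mem_Ici).trans_lt (hstrict self_mem_Ici hx.le hx)⟩
  have hz0 : (0 : ℝ) ≤ z := (hmaps self_mem_Ici).trans hz
  exact ⟨φ z, hφ_bij.mapsTo hz0, hleft z hz0⟩

lemma antitoneOn_one_div_comp {g : ℝ → ℝ} {s : Set ℝ} (hw : IsBihariFunction w)
    (hg : MonotoneOn g s) (hg0 : ∀ y ∈ s, 0 < g y) : AntitoneOn (fun y => 1 / w (g y)) s :=
  antitoneOn_one_div (hw.monotoneOn.comp hg fun y hy => (hg0 y hy).le)
    fun y hy => hw.pos _ (hg0 y hy)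

end IsBihariFunction

section Primitive

variable {R ρ : ℝ → ℝ} {a b x y : ℝ}

lemma AntitoneOn.intervalIntegrable_of_Ici (hρ : AntitoneOn ρ (Ici a)) :
    ∀ x ≥ a, ∀ y ≥ a, IntervalIntegrable ρ volume x y := fun _ hx _ hy =>
  (hρ.mono fun _ hs => (le_min hx hy).trans hs.1).intervalIntegrable

lemma primitive_sub_primitive (hρ : ∀ x ≥ a, ∀ y ≥ a, IntervalIntegrable ρ volume x y)
    (hR : ∀ x, R x = ∫ s in b..x, ρ s) (hb : a ≤ b) (hx : a ≤ x) (hy : a ≤ y) :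
    R y - R x = ∫ s in x..y, ρ s := by
  rw [hR, hR]
  exact integral_interval_sub_left (hρ b hb y hy) (hρ b hb x hx)

lemma strictMonoOn_primitive (hρ : ∀ x ≥ a, ∀ y ≥ a, IntervalIntegrable ρ volume x y)
    (hpos : ∀ x ≥ a, 0 < ρ x) (hR : ∀ x, R x = ∫ s in b..x, ρ s) (hb : a ≤ b) :
    StrictMonoOn R (Ici a) := by
  intro x hx y hy hxy
  have hpos_int : 0 < ∫ s in x..y, ρ s :=
    intervalIntegral_pos_of_pos_on (hρ x hx y hy) (fun s hs => hpos s (le_trans hx hs.1.le)) hxy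
  linarith [primitive_sub_primitive hρ hR hb hx hy]

lemma continuousOn_primitive_Ici (hρ : ∀ x ≥ a, ∀ y ≥ a, IntervalIntegrable ρ volume x y)
    (hR : ∀ x, R x = ∫ s in b..x, ρ s) (hb : a ≤ b) : ContinuousOn R (Ici a) := by
  intro x hx
  set M := max x b + 1
  have hxM : x < M := by linarith [le_max_left x b]
  have haM : a ≤ M := le_trans hx hxM.le
  have hcont := continuousOn_primitive_interval' (hρ a le_rfl M haM)
    (show b ∈ uIcc a M by rw [uIcc_of_le haM]; exact ⟨hb, by linarith [le_max_right x b]⟩)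
  rw [uIcc_of_le haM, ← funext hR] at hcont
  exact (hcont x ⟨hx, hxM.le⟩).mono_of_mem_nhdsWithin
    (mem_nhdsWithin.2 ⟨Iio M, isOpen_Iio, hxM, fun z hz => ⟨hz.2, le_of_lt hz.1⟩⟩)

end Primitive

section Substitution

variable {h ρ E k : ℝ → ℝ} {a b c : ℝ}

lemma hasDerivAt_const_add_primitive (hh : ContinuousOn h (Icc a b)) {x : ℝ} (hx : x ∈ Ioo a b) :
    HasDerivAt (fun y => c + ∫ s in a..y, h s) (h x) x :=
  (integral_hasDerivAt_right
    ((hh.mono (Icc_subset_Icc le_rfl hx.2.le)).intervalIntegrable_of_Icc hx.1.le)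
    ((hh.mono Ioo_subset_Icc_self).stronglyMeasurableAtFilter isOpen_Ioo x hx)
    (hh.continuousAt (Icc_mem_nhds hx.1 hx.2))).const_add c

lemma continuousOn_const_add_primitive (hab : a ≤ b) (hh : ContinuousOn h (Icc a b)) :
    ContinuousOn (fun y => c + ∫ s in a..y, h s) (Icc a b) := by
  have := continuousOn_primitive_interval' (μ := volume) (hh.intervalIntegrable_of_Icc hab)
    left_mem_uIcc
  rw [uIcc_of_le hab] at this
  exact continuousOn_const.add this

lemma integral_comp_primitive_mul (hab : a ≤ b) (hh : ContinuousOn h (Icc a b))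
    (hh0 : ∀ x ∈ Icc a b, 0 ≤ h x) :
    ∫ x in a..b, ρ (c + ∫ s in a..x, h s) * h x = ∫ y in c..c + ∫ s in a..b, h s, ρ y := by
  have := integral_comp_mul_deriv_of_deriv_nonneg (g := ρ)
    (by rw [uIcc_of_le hab]; exact continuousOn_const_add_primitive (c := c) hab hh)
    (fun x hx => hasDerivAt_const_add_primitive hh (by simpa [hab] using hx))
    (fun x hx => hh0 x (by simpa [hab] using Ioo_subset_Icc_self hx))
  simpa using this

lemma intervalIntegrable_comp_primitive_mul_iff (hab : a ≤ b) (hh : ContinuousOn h (Icc a b))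
    (hh0 : ∀ x ∈ Icc a b, 0 ≤ h x) :
    IntervalIntegrable (fun x => ρ (c + ∫ s in a..x, h s) * h x) volume a b ↔
      IntervalIntegrable ρ volume c (c + ∫ s in a..b, h s) := by
  have := integrable_comp_mul_deriv_iff_of_deriv_nonneg (g := ρ)
    (by rw [uIcc_of_le hab]; exact continuousOn_const_add_primitive (c := c) hab hh)
    (fun x hx => hasDerivAt_const_add_primitive hh (by simpa [hab] using hx))
    (fun x hx => hh0 x (by simpa [hab] using Ioo_subset_Icc_self hx))
  simpa using this

lemma integral_one_div_le_of_le_mul (hab : a ≤ b) (hh : ContinuousOn h (Icc a b))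
    (hh0 : ∀ x ∈ Icc a b, 0 ≤ h x)
    (hE : IntervalIntegrable (fun y => 1 / E y) volume c (c + ∫ s in a..b, h s))
    (hk : IntervalIntegrable k volume a b) (hEpos : ∀ x ∈ Icc a b, 0 < E (c + ∫ s in a..x, h s))
    (hle : ∀ x ∈ Icc a b, h x ≤ E (c + ∫ s in a..x, h s) * k x) :
    ∫ y in c..c + ∫ s in a..b, h s, 1 / E y ≤ ∫ x in a..b, k x := by
  rw [← integral_comp_primitive_mul hab hh hh0]
  refine integral_mono_on hab ((intervalIntegrable_comp_primitive_mul_iff hab hh hh0).2 hE) hk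
    fun x hx => ?_
  rw [one_div_mul_eq_div, div_le_iff₀' (hEpos x hx)]
  exact hle x hx

end Substitution

lemma integral_one_div_primitive_le {h F K ω : ℝ → ℝ} {a b N : ℝ} (hab : a ≤ b)
    (hh : ContinuousOn h (Icc a b)) (hF : ContinuousOn F (Icc a b))
    (hK : ContinuousOn K (Icc a b)) (hK0 : ∀ x ∈ Icc a b, 0 ≤ K x)
    (hKh : ∀ x ∈ Icc a b, K x ≤ h x) (hω : MonotoneOn ω (Ici N)) (hωpos : ∀ y ≥ N, 0 < ω y)
    (hhω : ∀ x ∈ Icc a b, h x ≤ F x * ω (N + ∫ s in a..x, h s) + K x) :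
    ∫ y in N..N + ∫ s in a..b, h s, 1 / ω y ≤
      (∫ x in a..b, F x) + ∫ y in N..N + ∫ s in a..b, K s, 1 / ω y := by
  have hh0 : ∀ x ∈ Icc a b, 0 ≤ h x := fun x hx => (hK0 x hx).trans (hKh x hx)
  have hσ := (antitoneOn_one_div hω hωpos).intervalIntegrable_of_Ici
  have hN_le : ∀ {g : ℝ → ℝ}, (∀ x ∈ Icc a b, 0 ≤ g x) → ∀ x ∈ Icc a b,
      N ≤ N + ∫ s in a..x, g s := fun hg x hx =>
    le_add_of_nonneg_right (integral_nonneg hx.1 fun s hs => hg s ⟨hs.1, hs.2.trans hx.2⟩)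
  have hKint : IntervalIntegrable (fun x => 1 / ω (N + ∫ s in a..x, K s) * K x) volume a b :=
    (intervalIntegrable_comp_primitive_mul_iff hab hK hK0).2
      (hσ N le_rfl _ (hN_le hK0 b ⟨hab, le_rfl⟩))
  rw [← integral_comp_primitive_mul hab hK hK0, ← integral_add (hF.intervalIntegrable_of_Icc hab)
    hKint]
  refine integral_one_div_le_of_le_mul hab hh hh0
    (hσ N le_rfl _ (hN_le hh0 b ⟨hab, le_rfl⟩))
    ((hF.intervalIntegrable_of_Icc hab).add hKint) (fun x hx => hωpos _ (hN_le hh0 x hx))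
    fun x hx => ?_
  have hn0n : N + ∫ s in a..x, K s ≤ N + ∫ s in a..x, h s :=
    (add_le_add_iff_left N).2 <| integral_mono_on hx.1
      ((hK.mono (Icc_subset_Icc le_rfl hx.2)).intervalIntegrable_of_Icc hx.1)
      ((hh.mono (Icc_subset_Icc le_rfl hx.2)).intervalIntegrable_of_Icc hx.1)
      fun s hs => hKh s ⟨hs.1, hs.2.trans hx.2⟩
  have hratio : K x ≤ ω (N + ∫ s in a..x, h s) * (1 / ω (N + ∫ s in a..x, K s) * K x) := by
    rw [← mul_assoc, mul_one_div]
    exact le_mul_of_one_le_left (hK0 x hx) ((one_le_div (hωpos _ (hN_le hK0 x hx))).2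
      (hω (hN_le hK0 x hx) (hN_le hh0 x hx) hn0n))
  calc h x ≤ F x * ω (N + ∫ s in a..x, h s) + K x := hhω x hx
    _ ≤ _ := by rw [mul_add, mul_comm (F x)]; exact (add_le_add_iff_left _).2 hratio

section Comparison

variable {h k F K E W G Ginv Ψ : ℝ → ℝ} {r c₀ x₀ x₁ : ℝ}

lemma IsBihariFunction.antitoneOn_one_div (hE : IsBihariFunction E) (hx₀ : 0 < x₀) :
    AntitoneOn (fun x => 1 / E x) (Ici x₀) :=
  hE.antitoneOn_one_div_comp monotoneOn_id fun _ hx => hx₀.trans_le hx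

lemma IsBihariFunction.strictMonoOn_of_integral (hE : IsBihariFunction E) (hx₀ : 0 < x₀)
    (hG : ∀ x, G x = ∫ s in x₀..x, 1 / E s) : StrictMonoOn G (Ici x₀) :=
  strictMonoOn_primitive (hE.antitoneOn_one_div hx₀).intervalIntegrable_of_Ici
    (fun x hx => one_div_pos.2 (hE.pos x (hx₀.trans_le hx))) hG le_rfl

lemma IsBihariFunction.nonneg_of_integral (hE : IsBihariFunction E) (hx₀ : 0 < x₀)
    (hG : ∀ x, G x = ∫ s in x₀..x, 1 / E s) {x : ℝ} (hx : x₀ ≤ x) : 0 ≤ G x := by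
  simpa [hG] using (hE.strictMonoOn_of_integral hx₀ hG).monotoneOn (mem_Ici.2 le_rfl) hx hx

lemma IsBihariFunction.pos_of_integral (hE : IsBihariFunction E) (hx₀ : 0 < x₀)
    (hG : ∀ x, G x = ∫ s in x₀..x, 1 / E s) {x : ℝ} (hx : x₀ < x) : 0 < G x := by
  simpa [hG] using hE.strictMonoOn_of_integral hx₀ hG self_mem_Ici hx.le hx

lemma IsBihariFunction.monotoneOn_inv (hE : IsBihariFunction E) (hx₀ : 0 < x₀)
    (hG : ∀ x, G x = ∫ s in x₀..x, 1 / E s) (hGinv : ∀ y ≥ 0, G (Ginv y) = y ∧ x₀ ≤ Ginv y) :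
    MonotoneOn Ginv (Ici 0) :=
  ((hE.strictMonoOn_of_integral hx₀ hG).monotoneOn.strictMonoOn_of_rightInvOn
    (fun y hy => (hGinv y hy).2) fun y hy => (hGinv y hy).1).monotoneOn

lemma IsBihariFunction.antitoneOn_one_div_comp_inv (hE : IsBihariFunction E)
    (hW : IsBihariFunction W) (hx₀ : 0 < x₀) (hG : ∀ x, G x = ∫ s in x₀..x, 1 / E s)
    (hGinv : ∀ y ≥ 0, G (Ginv y) = y ∧ x₀ ≤ Ginv y) :
    AntitoneOn (fun y => 1 / W (Ginv y)) (Ici 0) :=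
  hW.antitoneOn_one_div_comp (hE.monotoneOn_inv hx₀ hG hGinv)
    fun y hy => hx₀.trans_le (hGinv y hy).2

lemma IsBihariFunction.strictMonoOn_of_integral_comp_inv (hE : IsBihariFunction E)
    (hW : IsBihariFunction W) (hx₀ : 0 < x₀) (hG : ∀ x, G x = ∫ s in x₀..x, 1 / E s)
    (hGinv : ∀ y ≥ 0, G (Ginv y) = y ∧ x₀ ≤ Ginv y)
    (hΨ : ∀ x, Ψ x = ∫ s in x₁..x, 1 / W (Ginv s)) (hx₁ : 0 ≤ x₁) : StrictMonoOn Ψ (Ici 0) :=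
  strictMonoOn_primitive (hE.antitoneOn_one_div_comp_inv hW hx₀ hG hGinv).intervalIntegrable_of_Ici
    (fun y hy => one_div_pos.2 (hW.pos _ (hx₀.trans_le (hGinv y hy).2))) hΨ hx₁

lemma le_inv_of_le_mul_primitive (hr : 0 ≤ r) (hh : ContinuousOn h (Icc 0 r))
    (hh0 : ∀ s ∈ Icc 0 r, 0 ≤ h s) (hk : ContinuousOn k (Icc 0 r))
    (hk0 : ∀ s ∈ Icc 0 r, 0 ≤ k s) (hE : IsBihariFunction E) (hx₀ : 0 < x₀) (hc₀ : x₀ ≤ c₀)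
    (hG : ∀ x, G x = ∫ s in x₀..x, 1 / E s) (hGinv : ∀ y ≥ 0, G (Ginv y) = y ∧ x₀ ≤ Ginv y)
    (hhk : ∀ s ∈ Icc 0 r, h s ≤ E (c₀ + ∫ σ in 0..s, h σ) * k s) :
    c₀ + ∫ s in 0..r, h s ≤ Ginv (G c₀ + ∫ s in 0..r, k s) := by
  have hm : ∀ x ∈ Icc 0 r, x₀ ≤ c₀ + ∫ s in 0..x, h s := fun x hx => hc₀.trans <|
    le_add_of_nonneg_right (integral_nonneg hx.1 fun s hs => hh0 s ⟨hs.1, hs.2.trans hx.2⟩)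
  have hG_strict := hE.strictMonoOn_of_integral hx₀ hG
  have hn : 0 ≤ G c₀ + ∫ s in 0..r, k s :=
    add_nonneg (hE.nonneg_of_integral hx₀ hG hc₀) (integral_nonneg hr hk0)
  have hGm : G (c₀ + ∫ s in 0..r, h s) - G c₀ ≤ ∫ s in 0..r, k s := by
    rw [primitive_sub_primitive (hE.antitoneOn_one_div hx₀).intervalIntegrable_of_Ici hG le_rfl hc₀
      (hm r ⟨hr, le_rfl⟩)]
    exact integral_one_div_le_of_le_mul hr hh hh0
      ((hE.antitoneOn_one_div hx₀).intervalIntegrable_of_Ici _ hc₀ _ (hm r ⟨hr, le_rfl⟩))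
      (hk.intervalIntegrable_of_Icc hr) (fun s hs => hE.pos _ (hx₀.trans_le (hm s hs))) hhk
  refine (hG_strict.le_iff_le (hm r ⟨hr, le_rfl⟩) (hGinv _ hn).2).1 ?_
  rw [(hGinv _ hn).1]
  linarith

theorem const_add_integral_le_inv (hr : 0 ≤ r) (hh : ContinuousOn h (Icc 0 r))
    (hh0 : ∀ s ∈ Icc 0 r, 0 ≤ h s) (hF : ContinuousOn F (Icc 0 r))
    (hF0 : ∀ s ∈ Icc 0 r, 0 ≤ F s) (hK : ContinuousOn K (Icc 0 r))
    (hK0 : ∀ s ∈ Icc 0 r, 0 ≤ K s) (hE : IsBihariFunction E) (hW : IsBihariFunction W)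
    (hx₀ : 0 < x₀) (hc₀ : x₀ ≤ c₀) (hG : ∀ x, G x = ∫ s in x₀..x, 1 / E s)
    (hGinv : ∀ y ≥ 0, G (Ginv y) = y ∧ x₀ ≤ Ginv y)
    (hΨ : ∀ x, Ψ x = ∫ s in x₁..x, 1 / W (Ginv s)) (hx₁ : 0 ≤ x₁)
    (hhm : ∀ s ∈ Icc 0 r,
      h s ≤ E (c₀ + ∫ σ in 0..s, h σ) * (F s * W (c₀ + ∫ σ in 0..s, h σ) + K s))
    {y : ℝ} (hy : 0 ≤ y) (hΨy : Ψ (G c₀ + ∫ s in 0..r, K s) + ∫ s in 0..r, F s ≤ Ψ y) :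
    c₀ + ∫ s in 0..r, h s ≤ Ginv y := by
  set m : ℝ → ℝ := fun x => c₀ + ∫ s in 0..x, h s
  set k : ℝ → ℝ := fun x => F x * W (m x) + K x
  set n : ℝ → ℝ := fun x => G c₀ + ∫ s in 0..x, k s
  have hsub : ∀ {x}, x ∈ Icc 0 r → Icc 0 x ⊆ Icc 0 r := fun hx => Icc_subset_Icc le_rfl hx.2
  have hm : ∀ x ∈ Icc 0 r, 0 ≤ m x := fun x hx => (hx₀.le.trans hc₀).trans <|
    le_add_of_nonneg_right (integral_nonneg hx.1 fun s hs => hh0 s (hsub hx hs))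
  have hk : ContinuousOn k (Icc 0 r) := (hF.mul (hW.continuousOn.comp
    (continuousOn_const_add_primitive hr hh) hm)).add hK
  have hKk : ∀ x ∈ Icc 0 r, K x ≤ k x := fun x hx =>
    le_add_of_nonneg_left (mul_nonneg (hF0 x hx) (hW.nonneg (hm x hx)))
  have hGc₀ : 0 ≤ G c₀ := hE.nonneg_of_integral hx₀ hG hc₀
  have hn : ∀ x ∈ Icc 0 r, 0 ≤ n x := fun x hx => add_nonneg hGc₀ <|
    integral_nonneg hx.1 fun s hs => (hK0 s (hsub hx hs)).trans (hKk s (hsub hx hs))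
  have hmn : ∀ x ∈ Icc 0 r, m x ≤ Ginv (n x) := fun x hx =>
    le_inv_of_le_mul_primitive hx.1 (hh.mono (hsub hx)) (fun s hs => hh0 s (hsub hx hs))
      (hk.mono (hsub hx)) (fun s hs => (hK0 s (hsub hx hs)).trans (hKk s (hsub hx hs))) hE hx₀
      hc₀ hG hGinv fun s hs => hhm s (hsub hx hs)
  have hGinv_mono := hE.monotoneOn_inv hx₀ hG hGinv
  have hω : MonotoneOn (fun y => W (Ginv y)) (Ici 0) :=
    hW.monotoneOn.comp hGinv_mono fun y hy => hx₀.le.trans (hGinv y hy).2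
  have hωpos : ∀ y ≥ 0, 0 < W (Ginv y) := fun y hy => hW.pos _ (hx₀.trans_le (hGinv y hy).2)
  have hσ := (antitoneOn_one_div hω hωpos).intervalIntegrable_of_Ici
  have hΨ_strict := hE.strictMonoOn_of_integral_comp_inv hW hx₀ hG hGinv hΨ hx₁
  have hΨn := integral_one_div_primitive_le hr hk hF hK hK0 hKk
    (hω.mono (Ici_subset_Ici.2 hGc₀)) (fun y hy => hωpos y (hGc₀.trans hy)) fun x hx =>
      (add_le_add_iff_right _).2 <| mul_le_mul_of_nonneg_left
        (hW.monotoneOn (hm x hx) (hx₀.le.trans (hGinv _ (hn x hx)).2) (hmn x hx)) (hF0 x hx)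
  rw [← primitive_sub_primitive hσ hΨ hx₁ hGc₀ (hn r ⟨hr, le_rfl⟩),
    ← primitive_sub_primitive hσ hΨ hx₁ hGc₀ (add_nonneg hGc₀ (integral_nonneg hr hK0))] at hΨn
  have hny : n r ≤ y := (hΨ_strict.le_iff_le (hn r ⟨hr, le_rfl⟩) hy).1 (by linarith)
  exact (hmn r ⟨hr, le_rfl⟩).trans (hGinv_mono (hn r ⟨hr, le_rfl⟩) hy hny)

end Comparison

structure IsMonotoneKernel (k : ℝ → ℝ → ℝ) : Prop where
  continuousOn : ∀ t ≥ 0, ContinuousOn (k t) (Ici 0)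
  nonneg : ∀ t ≥ 0, ∀ s ≥ 0, 0 ≤ k t s
  monotoneOn : ∀ s ≥ 0, MonotoneOn (fun t => k t s) (Ici 0)

namespace IsMonotoneKernel

variable {k l : ℝ → ℝ → ℝ} {a : ℝ → ℝ}

lemma add (hk : IsMonotoneKernel k) (hl : IsMonotoneKernel l) :
    IsMonotoneKernel (fun t s => k t s + l t s) where
  continuousOn t ht := (hk.continuousOn t ht).add (hl.continuousOn t ht)
  nonneg t ht s hs := add_nonneg (hk.nonneg t ht s hs) (hl.nonneg t ht s hs)
  monotoneOn s hs := (hk.monotoneOn s hs).add (hl.monotoneOn s hs)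

lemma mul_right (hk : IsMonotoneKernel k) (ha : ContinuousOn a (Ici 0))
    (ha0 : ∀ s ≥ 0, 0 ≤ a s) : IsMonotoneKernel (fun t s => k t s * a s) where
  continuousOn t ht := (hk.continuousOn t ht).mul ha
  nonneg t ht s hs := mul_nonneg (hk.nonneg t ht s hs) (ha0 s hs)
  monotoneOn s hs _ h₁ _ h₂ h₁₂ :=
    mul_le_mul_of_nonneg_right (hk.monotoneOn s hs h₁ h₂ h₁₂) (ha0 s hs)

end IsMonotoneKernel

lemma IsMonotoneKernel.le_const_add_integral_of_retarded {v c α : ℝ → ℝ} {k : ℝ → ℝ → ℝ}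
    (hk : IsMonotoneKernel k) (hc : MonotoneOn c (Ici 0)) (hα0 : ∀ t ≥ 0, 0 ≤ α t)
    (hα : ∀ t ≥ 0, α t ≤ t) (hv : ∀ t ≥ 0, v t ≤ c t + ∫ s in 0..α t, k t s) {s t : ℝ}
    (hs : 0 ≤ s) (hst : s ≤ t) : v s ≤ c t + ∫ σ in 0..s, k t σ := by
  have ht : 0 ≤ t := hs.trans hst
  have hint : ∀ {τ b : ℝ}, 0 ≤ τ → 0 ≤ b → IntervalIntegrable (k τ) volume 0 b :=
    fun hτ hb => ((hk.continuousOn _ hτ).mono Icc_subset_Ici_self).intervalIntegrable_of_Icc hb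
  calc v s ≤ c s + ∫ σ in 0..α s, k s σ := hv s hs
    _ ≤ c t + ∫ σ in 0..α s, k t σ := add_le_add (hc hs ht hst) <|
      integral_mono_on (hα0 s hs) (hint hs (hα0 s hs)) (hint ht (hα0 s hs))
        fun σ hσ => hk.monotoneOn σ hσ.1 hs ht hst
    _ ≤ c t + ∫ σ in 0..s, k t σ := (add_le_add_iff_left _).2 <|
      integral_mono_interval le_rfl (hα0 s hs) (hα s hs)
        (ae_restrict_of_forall_mem measurableSet_Ioc fun σ hσ => hk.nonneg t ht σ hσ.1.le)
        (hint ht hs)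

theorem le_inv_of_retarded_integral_inequality {u c α φ φinv η w G Ginv Ψ : ℝ → ℝ}
    {f g : ℝ → ℝ → ℝ} {x₀ x₁ t y : ℝ} (hu : ContinuousOn u (Ici 0)) (hu0 : ∀ t ≥ 0, 0 ≤ u t)
    (hc : MonotoneOn c (Ici 0)) (hc₀ : x₀ ≤ c 0) (hx₀ : 0 < x₀)
    (hα0 : ∀ t ≥ 0, 0 ≤ α t) (hα : ∀ t ≥ 0, α t ≤ t) (hf : IsMonotoneKernel f)
    (hg : IsMonotoneKernel g) (hφ : MapsTo φ (Ici 0) (Ici 0)) (hφinv : IsBihariFunction φinv)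
    (hφinv_left : ∀ x ≥ 0, φinv (φ x) = x) (hη : IsBihariFunction η) (hw : IsBihariFunction w)
    (hG : ∀ x, G x = ∫ s in x₀..x, 1 / η (φinv s))
    (hGinv : ∀ y ≥ 0, G (Ginv y) = y ∧ x₀ ≤ Ginv y)
    (hΨ : ∀ x, Ψ x = ∫ s in x₁..x, 1 / w (φinv (Ginv s))) (hx₁ : 0 ≤ x₁)
    (hmain : ∀ t ≥ 0,
      φ (u t) ≤ c t + ∫ s in 0..α t, (f t s * η (u s) * w (u s) + g t s * η (u s)))
    (ht : 0 ≤ t) (hy : 0 ≤ y)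
    (hΨy : Ψ (G (c t) + ∫ s in 0..α t, g t s) + ∫ s in 0..α t, f t s ≤ Ψ y) :
    u t ≤ φinv (Ginv y) := by
  have hηu := hη.continuousOn.comp hu hu0
  have hk := ((hf.mul_right hηu fun s hs => hη.nonneg (hu0 s hs)).mul_right
    (hw.continuousOn.comp hu hu0) fun s hs => hw.nonneg (hu0 s hs)).add
    (hg.mul_right hηu fun s hs => hη.nonneg (hu0 s hs))
  set m : ℝ → ℝ := fun s => c t + ∫ σ in 0..s, (f t σ * η (u σ) * w (u σ) + g t σ * η (u σ))
  have hum : ∀ s ∈ Icc 0 (α t), u s ≤ φinv (m s) := fun s hs => by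
    have hφu := hk.le_const_add_integral_of_retarded hc hα0 hα hmain hs.1 (hs.2.trans (hα t ht))
    rw [← hφinv_left (u s) (hu0 s hs.1)]
    exact hφinv.monotoneOn (hφ (hu0 s hs.1)) ((hφ (hu0 s hs.1)).trans hφu) hφu
  have hmt : m (α t) ≤ Ginv y := const_add_integral_le_inv (hα0 t ht)
    ((hk.continuousOn t ht).mono Icc_subset_Ici_self) (fun s hs => hk.nonneg t ht s hs.1)
    ((hf.continuousOn t ht).mono Icc_subset_Ici_self) (fun s hs => hf.nonneg t ht s hs.1)
    ((hg.continuousOn t ht).mono Icc_subset_Ici_self) (fun s hs => hg.nonneg t ht s hs.1)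
    (hη.comp hφinv) (hw.comp hφinv) hx₀ (hc₀.trans (hc self_mem_Ici ht ht)) hG hGinv hΨ hx₁
    (fun s hs => ?_) hy hΨy
  · rw [← hφinv_left (u t) (hu0 t ht)]
    exact hφinv.monotoneOn (hφ (hu0 t ht)) (hx₀.le.trans (hGinv y hy).2)
      ((hmain t ht).trans hmt)
  · have hφm : 0 ≤ φinv (m s) := (hu0 s hs.1).trans (hum s hs)
    have hη_le : η (u s) ≤ η (φinv (m s)) := hη.monotoneOn (hu0 s hs.1) hφm (hum s hs)
    have hw_le : w (u s) ≤ w (φinv (m s)) := hw.monotoneOn (hu0 s hs.1) hφm (hum s hs)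
    calc f t s * η (u s) * w (u s) + g t s * η (u s)
        = f t s * (η (u s) * w (u s)) + g t s * η (u s) := by ring
      _ ≤ f t s * (η (φinv (m s)) * w (φinv (m s))) + g t s * η (φinv (m s)) :=
        add_le_add (mul_le_mul_of_nonneg_left (mul_le_mul hη_le hw_le (hw.nonneg (hu0 s hs.1))
          (hη.nonneg hφm)) (hf.nonneg t ht s hs.1))
          (mul_le_mul_of_nonneg_left hη_le (hg.nonneg t ht s hs.1))
      _ = η (φinv (m s)) * (f t s * w (φinv (m s)) + g t s) := by ring

lemma tendsto_integral_nhdsGE_zero {k : ℝ → ℝ → ℝ} {α : ℝ → ℝ}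
    (hk : ContinuousOn (Function.uncurry k) (Icc 0 1 ×ˢ Icc 0 1))
    (hα0 : ∀ t ≥ 0, 0 ≤ α t) (hα : ∀ t ≥ 0, α t ≤ t) :
    Tendsto (fun t => ∫ s in 0..α t, k t s) (𝓝[≥] 0) (𝓝 0) := by
  obtain ⟨M, hM⟩ := (isCompact_Icc.prod isCompact_Icc).exists_bound_of_continuousOn hk
  have hM0 : 0 ≤ M := (norm_nonneg _).trans (hM (0, 0) ⟨left_mem_Icc.2 zero_le_one,
    left_mem_Icc.2 zero_le_one⟩)
  have hlim : Tendsto (fun t => M * t) (𝓝[≥] 0) (𝓝 0) := by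
    simpa using (tendsto_id.const_mul M).mono_left (nhdsWithin_le_nhds (a := (0 : ℝ)))
  refine squeeze_zero_norm' ?_ hlim
  filter_upwards [Icc_mem_nhdsGE zero_lt_one] with t ht
  have hαt : α t ≤ 1 := (hα t ht.1).trans ht.2
  calc ‖∫ s in 0..α t, k t s‖ ≤ M * |α t - 0| := norm_integral_le_of_norm_le_const
        fun s hs => by
          rw [uIoc_of_le (hα0 t ht.1)] at hs
          exact hM (t, s) ⟨ht, hs.1.le, hs.2.trans hαt⟩
    _ ≤ M * t := by
      rw [sub_zero, abs_of_nonneg (hα0 t ht.1)]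
      exact mul_le_mul_of_nonneg_left (hα t ht.1) hM0

lemma eventually_exists_eq_add {Ψ p F : ℝ → ℝ} {l : Filter ℝ} {p₀ : ℝ}
    (hΨ : StrictMonoOn Ψ (Ioi 0)) (hΨ_cont : ContinuousOn Ψ (Ioi 0)) (hp₀ : 0 < p₀)
    (hp : Tendsto p l (𝓝 p₀)) (hF : Tendsto F l (𝓝 0)) (hF0 : ∀ᶠ t in l, 0 ≤ F t) :
    ∀ᶠ t in l, ∃ y > 0, Ψ y = Ψ (p t) + F t := by
  have hlt : Ψ p₀ < Ψ (p₀ + 1) := hΨ hp₀ (by simp only [mem_Ioi]; linarith) (lt_add_one p₀)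
  have hlim : Tendsto (fun t => Ψ (p t) + F t) l (𝓝 (Ψ p₀)) := by
    simpa using ((hΨ_cont.continuousAt (Ioi_mem_nhds hp₀)).tendsto.comp hp).add hF
  filter_upwards [hF0, hp.eventually (Ioi_mem_nhds hp₀),
    hp.eventually (Iio_mem_nhds (lt_add_one p₀)), hlim.eventually (Iio_mem_nhds hlt)]
    with t hFt hpt hpt' hΨt
  obtain ⟨y, hy, hyeq⟩ := intermediate_value_Icc hpt'.le
    (hΨ_cont.mono fun z hz => lt_of_lt_of_le hpt hz.1) ⟨le_add_of_nonneg_right hFt, hΨt.le⟩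
  exact ⟨y, lt_of_lt_of_le hpt hy.1, hyeq⟩

theorem eventually_exists_eq_integral_add {c α E W G Ginv Ψ : ℝ → ℝ} {f g : ℝ → ℝ → ℝ}
    {x₀ x₁ : ℝ} (hc : ContinuousWithinAt c (Ici 0) 0) (hα0 : ∀ t ≥ 0, 0 ≤ α t)
    (hα : ∀ t ≥ 0, α t ≤ t) (hf : ContinuousOn (Function.uncurry f) (Icc 0 1 ×ˢ Icc 0 1))
    (hf0 : ∀ t ≥ 0, ∀ s ≥ 0, 0 ≤ f t s)
    (hg : ContinuousOn (Function.uncurry g) (Icc 0 1 ×ˢ Icc 0 1))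
    (hE : IsBihariFunction E) (hW : IsBihariFunction W) (hx₀ : 0 < x₀) (hc₀ : x₀ < c 0)
    (hG : ∀ x, G x = ∫ s in x₀..x, 1 / E s) (hGinv : ∀ y ≥ 0, G (Ginv y) = y ∧ x₀ ≤ Ginv y)
    (hΨ : ∀ x, Ψ x = ∫ s in x₁..x, 1 / W (Ginv s)) (hx₁ : 0 ≤ x₁) :
    ∀ᶠ t in 𝓝[≥] 0, ∃ y > 0,
      Ψ y = Ψ (G (c t) + ∫ s in 0..α t, g t s) + ∫ s in 0..α t, f t s := by
  have hΨ_strict := hE.strictMonoOn_of_integral_comp_inv hW hx₀ hG hGinv hΨ hx₁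
  have hG_cont : ContinuousAt G (c 0) :=
    (continuousOn_primitive_Ici (hE.antitoneOn_one_div hx₀).intervalIntegrable_of_Ici hG
      le_rfl).continuousAt (Ici_mem_nhds hc₀)
  have hΨ_cont := continuousOn_primitive_Ici
    (hE.antitoneOn_one_div_comp_inv hW hx₀ hG hGinv).intervalIntegrable_of_Ici hΨ hx₁
  have hp : Tendsto (fun t => G (c t) + ∫ s in 0..α t, g t s) (𝓝[≥] 0) (𝓝 (G (c 0))) := by
    simpa using (hG_cont.tendsto.comp hc).add (tendsto_integral_nhdsGE_zero hg hα0 hα)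
  exact eventually_exists_eq_add (hΨ_strict.mono Ioi_subset_Ici_self)
    (hΨ_cont.mono Ioi_subset_Ici_self)
    (hE.pos_of_integral hx₀ hG hc₀) hp (tendsto_integral_nhdsGE_zero hf hα0 hα)
    (eventually_nhdsWithin_of_forall fun t ht =>
      integral_nonneg (hα0 t ht) fun s hs => hf0 t ht s hs.1)

/-- `φinv` is the two-sided inverse of `φ` on `[0,∞)` and `Ginv` that of `G : [x₀,∞) → [0,∞)`.
That `Ψ(p t) + ∫₀^{α t} f` lies in the domain of `Ψ⁻¹` is expressed as `∃ y > 0, Ψ y = …`, and the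
bound `u t ≤ φ⁻¹(G⁻¹(Ψ⁻¹(…)))` as `u t ≤ φinv (Ginv y)`. -/
theorem thm1_retarded_inequality_general
    (u c α : ℝ → ℝ) (f g : ℝ → ℝ → ℝ) (φ φinv η w G Ginv p Ψ : ℝ → ℝ)
    (x₀ x₁ : ℝ)
    (hu_cont : ContinuousOn u (Ici 0)) (hu_nonneg : ∀ t ≥ (0:ℝ), 0 ≤ u t)
    (hc_cont : ContinuousOn c (Ici 0))
    (hc_mono : MonotoneOn c (Ici 0))
    (hα_nonneg : ∀ t ≥ (0:ℝ), 0 ≤ α t) (hα_le : ∀ t ≥ (0:ℝ), α t ≤ t)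
    (hf_cont : ContinuousOn (Function.uncurry f) (Ici 0 ×ˢ Ici 0))
    (hf_nonneg : ∀ t ≥ (0:ℝ), ∀ s ≥ (0:ℝ), 0 ≤ f t s)
    (hf_mono : ∀ s ≥ (0:ℝ), MonotoneOn (fun t => f t s) (Ici 0))
    (hg_cont : ContinuousOn (Function.uncurry g) (Ici 0 ×ˢ Ici 0))
    (hg_nonneg : ∀ t ≥ (0:ℝ), ∀ s ≥ (0:ℝ), 0 ≤ g t s)
    (hg_mono : ∀ s ≥ (0:ℝ), MonotoneOn (fun t => g t s) (Ici 0))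
    (hφ_mono : StrictMonoOn φ (Ici 0))
    (hφ_bij : BijOn φ (Ici 0) (Ici 0))
    (hφinv_left : ∀ x ≥ (0:ℝ), φinv (φ x) = x)
    (hφinv_right : ∀ y ≥ (0:ℝ), φ (φinv y) = y)
    (hη_cont : ContinuousOn η (Ici 0)) (hη_mono : MonotoneOn η (Ici 0))
    (hη_pos : ∀ x > (0:ℝ), 0 < η x)
    (hw_cont : ContinuousOn w (Ici 0)) (hw_mono : MonotoneOn w (Ici 0))
    (hw_pos : ∀ x > (0:ℝ), 0 < w x)
    (hx₀_pos : 0 < x₀) (hx₀_lt : x₀ < c 0) (hx₁ : 0 < x₁)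
    (hG : ∀ x, G x = ∫ s in x₀..x, 1 / η (φinv s))
    (hGinv_right : ∀ y ≥ (0:ℝ), G (Ginv y) = y ∧ x₀ ≤ Ginv y)
    (hp : ∀ t, p t = G (c t) + ∫ s in (0:ℝ)..(α t), g t s)
    (hΨ : ∀ x, Ψ x = ∫ s in x₁..x, 1 / w (φinv (Ginv s)))
    (hmain : ∀ t ≥ (0:ℝ),
      φ (u t) ≤ c t + ∫ s in (0:ℝ)..(α t),
        (f t s * η (u s) * w (u s) + g t s * η (u s))) :
    ∃ τ > (0:ℝ), ∀ t ∈ Icc (0:ℝ) τ,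
      ∃ y > (0:ℝ), Ψ y = Ψ (p t) + (∫ s in (0:ℝ)..(α t), f t s) ∧
        u t ≤ φinv (Ginv y) := by
  have hφinv : IsBihariFunction φinv :=
    .of_inverse hφ_mono.monotoneOn hφ_bij hφinv_left hφinv_right
  have hη : IsBihariFunction η := ⟨hη_cont, hη_mono, hη_pos⟩
  have hw : IsBihariFunction w := ⟨hw_cont, hw_mono, hw_pos⟩
  have hsq : Icc (0 : ℝ) 1 ×ˢ Icc (0 : ℝ) 1 ⊆ Ici 0 ×ˢ Ici 0 :=
    prod_mono Icc_subset_Ici_self Icc_subset_Ici_self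
  obtain ⟨τ, hτ, hτsub⟩ := mem_nhdsGE_iff_exists_Icc_subset.1 <|
    eventually_exists_eq_integral_add (hc_cont 0 self_mem_Ici) hα_nonneg hα_le
      (hf_cont.mono hsq) hf_nonneg (hg_cont.mono hsq) (hη.comp hφinv) (hw.comp hφinv) hx₀_pos
      hx₀_lt hG hGinv_right hΨ hx₁.le
  refine ⟨τ, hτ, fun t ht => ?_⟩
  obtain ⟨y, hy, hyeq⟩ := hτsub ht
  rw [hp]
  exact ⟨y, hy, hyeq, le_inv_of_retarded_integral_inequality hu_cont hu_nonneg hc_mono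
    hx₀_lt.le hx₀_pos hα_nonneg hα_le
    ⟨fun t ht => ContinuousOn.uncurry_left t ht hf_cont, hf_nonneg, hf_mono⟩
    ⟨fun t ht => ContinuousOn.uncurry_left t ht hg_cont, hg_nonneg, hg_mono⟩
    hφ_bij.mapsTo hφinv hφinv_left hη hw hG hGinv_right hΨ hx₁.le hmain ht.1 hy.le hyeq.ge⟩

/-- Theorem 1: retarded integral inequality.  Inverse functions are handled as
follows: `φinv` is the two-sided inverse of the bijection `φ : [0,∞) → [0,∞)`;
`Ginv` is the inverse of the strictly increasing `G` (which maps `[x₀,∞)` onto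
`[0,∞)` by the divergence hypothesis); membership of `Ψ(p t) + ∫₀^{α t} f`
in `Dom(Ψ⁻¹)` is expressed as `∃ y > 0, Ψ y = …`, and the bound
`u t ≤ φ⁻¹(G⁻¹(Ψ⁻¹(…)))` as `u t ≤ φinv (Ginv y)`. -/
theorem thm1_retarded_inequality
    (u c α : ℝ → ℝ) (f g : ℝ → ℝ → ℝ) (φ φinv η w G Ginv p Ψ : ℝ → ℝ)
    (x₀ x₁ : ℝ)
    (hu_cont : ContinuousOn u (Ici 0)) (hu_nonneg : ∀ t ≥ (0:ℝ), 0 ≤ u t)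
    (hc_cont : ContinuousOn c (Ici 0)) (hc_pos : ∀ t ≥ (0:ℝ), 0 < c t)
    (hc_mono : MonotoneOn c (Ici 0))
    (hα_C1 : ContDiffOn ℝ 1 α (Ici 0)) (hα_mono : MonotoneOn α (Ici 0))
    (hα_nonneg : ∀ t ≥ (0:ℝ), 0 ≤ α t) (hα_le : ∀ t ≥ (0:ℝ), α t ≤ t)
    (hf_cont : ContinuousOn (Function.uncurry f) (Ici 0 ×ˢ Ici 0))
    (hf_nonneg : ∀ t ≥ (0:ℝ), ∀ s ≥ (0:ℝ), 0 ≤ f t s)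
    (hf_mono : ∀ s ≥ (0:ℝ), MonotoneOn (fun t => f t s) (Ici 0))
    (hg_cont : ContinuousOn (Function.uncurry g) (Ici 0 ×ˢ Ici 0))
    (hg_nonneg : ∀ t ≥ (0:ℝ), ∀ s ≥ (0:ℝ), 0 ≤ g t s)
    (hg_mono : ∀ s ≥ (0:ℝ), MonotoneOn (fun t => g t s) (Ici 0))
    (hφ_cont : ContinuousOn φ (Ici 0)) (hφ_mono : StrictMonoOn φ (Ici 0))
    (hφ_bij : BijOn φ (Ici 0) (Ici 0))
    (hφinv_left : ∀ x ≥ (0:ℝ), φinv (φ x) = x)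
    (hφinv_right : ∀ y ≥ (0:ℝ), φ (φinv y) = y)
    (hη_cont : ContinuousOn η (Ici 0)) (hη_mono : MonotoneOn η (Ici 0))
    (hη_pos : ∀ x > (0:ℝ), 0 < η x)
    (hw_cont : ContinuousOn w (Ici 0)) (hw_mono : MonotoneOn w (Ici 0))
    (hw_pos : ∀ x > (0:ℝ), 0 < w x)
    (hx₀_pos : 0 < x₀) (hx₀_lt : x₀ < c 0) (hx₁ : 0 < x₁)
    (hG : ∀ x, G x = ∫ s in x₀..x, 1 / η (φinv s))
    (hG_div : Tendsto G atTop atTop)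
    (hGinv_left : ∀ x ≥ x₀, Ginv (G x) = x)
    (hGinv_right : ∀ y ≥ (0:ℝ), G (Ginv y) = y ∧ x₀ ≤ Ginv y)
    (hp : ∀ t, p t = G (c t) + ∫ s in (0:ℝ)..(α t), g t s)
    (hΨ : ∀ x, Ψ x = ∫ s in x₁..x, 1 / w (φinv (Ginv s)))
    (hmain : ∀ t ≥ (0:ℝ),
      φ (u t) ≤ c t + ∫ s in (0:ℝ)..(α t),
        (f t s * η (u s) * w (u s) + g t s * η (u s))) :
    ∃ τ > (0:ℝ), ∀ t ∈ Icc (0:ℝ) τ,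
      ∃ y > (0:ℝ), Ψ y = Ψ (p t) + (∫ s in (0:ℝ)..(α t), f t s) ∧
        u t ≤ φinv (Ginv y) :=
  thm1_retarded_inequality_general u c α f g φ φinv η w G Ginv p Ψ x₀ x₁ hu_cont hu_nonneg hc_cont
    hc_mono hα_nonneg hα_le hf_cont hf_nonneg hf_mono hg_cont hg_nonneg hg_mono hφ_mono hφ_bij
    hφinv_left hφinv_right hη_cont hη_mono hη_pos hw_cont hw_mono hw_pos hx₀_pos hx₀_lt hx₁ hG
    hGinv_right hp hΨ hmain
end

section
/- Under the hypotheses of Theorem 1 (u, c, α, f, g, φ, η, w, G, Ψ as there), if instead φ(u(t)) ≤ c(t) + ∫_0^{α(t)} f(t,s)η(u(s))w(u(s)) ds + ∫_0^t g(t,s)η(u(s))w(u(s)) ds for all t ≥ 0, then u(t) ≤ φ⁻¹(G⁻¹(Ψ⁻¹(Ψ(G(c(t))) + ∫_0^{α(t)} f(t,s) ds + ∫_0^t g(t,s) ds))) for all t ∈ [0,τ], where τ > 0 is chosen so that Ψ(G(c(t))) + ∫_0^{α(t)} f(t,s) ds + ∫_0^t g(t,s) ds lies in the domain of Ψ⁻¹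 for t ∈ [0,τ]. -/
/-!
Fix `T`. Since `c`, `f` and `g` increase in `t`, freezing them at `T` bounds `φ (u t)` on `[0, T]`
by the increasing function `z t = c T + ∫₀^{α t} f T s K s ds + ∫₀^t g T s K s ds`, where
`K = (η w) ∘ u`. As `Ginv ∘ G = id`, the Bihari transform `Ψ ∘ G` has derivative
`1 / (η w)(φinv x)`, and `K s ≤ (η w)(φinv (z t))` for `s ≤ t`, so
`(Ψ ∘ G ∘ z)' ≤ f T (α t) α' t + g T t`. Integrating over `[0, T]` and inverting `Ψ`, `G`
and `φ` in turn gives the bound.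
-/

open Set Filter intervalIntegral Topology MeasureTheory

section InverseFunction

variable {α β : Type*} [LinearOrder α] [LinearOrder β] {φ : α → β} {ψ : β → α}
  {s : Set α} {t : Set β}

theorem StrictMonoOn.monotoneOn_of_rightInvOn (hφ : StrictMonoOn φ s) (hψ : MapsTo ψ t s)
    (hinv : RightInvOn ψ φ t) : MonotoneOn ψ t := fun x hx y hy hxy =>
  (hφ.le_iff_le (hψ hx) (hψ hy)).1 (by rwa [hinv hx, hinv hy])

theorem MonotoneOn.continuousAt_of_leftInvOn [TopologicalSpace α] [OrderTopology α]
    [DenselyOrdered α] [TopologicalSpace β] [OrderTopology β] {y : β}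
    (hψ : MonotoneOn ψ t) (hinv : LeftInvOn ψ φ s) (hφ : MapsTo φ s t) (ht : t ∈ 𝓝 y)
    (hs : s ∈ 𝓝 (ψ y)) : ContinuousAt ψ y :=
  continuousAt_of_monotoneOn_of_image_mem_nhds hψ ht
    (mem_of_superset hs fun x hx => ⟨φ x, hφ hx, hinv hx⟩)

end InverseFunction

theorem StrictMonoOn.monotoneOn_and_continuousAt_of_invOn_Ici {φ ψ : ℝ → ℝ} {a b : ℝ}
    (hφ : StrictMonoOn φ (Ici a)) (hinv : InvOn ψ φ (Ici a) (Ici b))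
    (hφ_maps : MapsTo φ (Ici a) (Ici b)) (hψ_maps : MapsTo ψ (Ici b) (Ici a)) :
    MonotoneOn ψ (Ici b) ∧ ∀ y > b, a < ψ y ∧ ContinuousAt ψ y := by
  have hmono := hφ.monotoneOn_of_rightInvOn hψ_maps hinv.2
  refine ⟨hmono, fun y hy => ?_⟩
  have hlt : a < ψ y := by
    refine (hψ_maps hy.le).lt_of_ne fun h => hy.not_ge ?_
    calc y = φ (ψ y) := (hinv.2 hy.le).symm
      _ = φ a := by rw [← h]
      _ ≤ φ (ψ b) := hφ.monotoneOn self_mem_Ici (hψ_maps self_mem_Ici) (hψ_maps self_mem_Ici)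
      _ = b := hinv.2 self_mem_Ici
  exact ⟨hlt, hmono.continuousAt_of_leftInvOn hinv.1 hφ_maps (Ici_mem_nhds hy)
    (Ici_mem_nhds hlt)⟩

theorem ContinuousOn.nonneg_of_pos {k : ℝ → ℝ} (hk : ContinuousOn k (Ici 0))
    (hpos : ∀ x > 0, 0 < k x) : ∀ x ≥ 0, 0 ≤ k x := by
  intro x hx
  rcases hx.lt_or_eq with hx | rfl
  · exact (hpos x hx).le
  · refine ge_of_tendsto ((hk 0 self_mem_Ici).mono Ioi_subset_Ici_self) ?_
    filter_upwards [self_mem_nhdsWithin] with x hx using (hpos x hx).le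

theorem continuousOn_one_div_comp {k h : ℝ → ℝ} (hk : ContinuousOn k (Ici 0))
    (hk_pos : ∀ x > 0, 0 < k x) (hh : ∀ q > 0, 0 < h q ∧ ContinuousAt h q) :
    ContinuousOn (fun q => 1 / k (h q)) (Ioi 0) := fun q hq =>
  (continuousAt_const.div ((hk.continuousAt (Ici_mem_nhds (hh q hq).1)).comp (hh q hq).2)
    (hk_pos _ (hh q hq).1).ne').continuousWithinAt

section Primitive

variable {θ : ℝ → ℝ} {a : ℝ}

theorem intervalIntegrable_of_tendsto_integral_atTop {b : ℝ}
    (h : Tendsto (fun x => ∫ s in a..x, θ s) atTop atTop) (hab : a ≤ b) :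
    IntervalIntegrable θ volume a b := by
  obtain ⟨x, hbx, hx⟩ := ((eventually_ge_atTop b).and (h.eventually_ne_atTop 0)).exists
  have hint : IntervalIntegrable θ volume a x := by
    by_contra hθ
    exact hx (integral_undef hθ)
  refine hint.mono_set ?_
  rw [uIcc_of_le hab, uIcc_of_le (hab.trans hbx)]
  exact Icc_subset_Icc_right hbx

theorem strictMonoOn_integral_of_pos {s : Set ℝ} (hs : s.OrdConnected)
    (hint : ∀ x ∈ s, IntervalIntegrable θ volume a x) (hpos : ∀ x ∈ interior s, 0 < θ x) :
    StrictMonoOn (fun x => ∫ t in a..x, θ t) s := by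
  intro x hx y hy hxy
  have hpos_xy : 0 < ∫ t in x..y, θ t :=
    intervalIntegral_pos_of_pos_on ((hint x hx).symm.trans (hint y hy))
      (fun z hz => hpos z (interior_maximal (Ioo_subset_Icc_self.trans (hs.out hx hy))
        isOpen_Ioo hz)) hxy
  have hsplit := integral_interval_sub_left (hint y hy) (hint x hx)
  dsimp only
  linarith

theorem hasDerivAt_integral_of_continuousOn {U : Set ℝ} {x : ℝ} (hU : IsOpen U)
    (hθ : ContinuousOn θ U) (hx : x ∈ U) (hint : IntervalIntegrable θ volume a x) :
    HasDerivAt (fun y => ∫ t in a..y, θ t) (θ x) x :=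
  integral_hasDerivAt_right hint (hθ.stronglyMeasurableAtFilter hU x hx)
    (hθ.continuousAt (hU.mem_nhds hx))

end Primitive

noncomputable def retardedIntegral (α F H : ℝ → ℝ) (t : ℝ) : ℝ :=
  (∫ s in (0 : ℝ)..α t, F s) + ∫ s in (0 : ℝ)..t, H s

section RetardedIntegral

variable {α F H : ℝ → ℝ}

theorem retardedIntegral_zero (hα : α 0 = 0) : retardedIntegral α F H 0 = 0 := by
  simp [retardedIntegral, hα]

/- Only the values of `F` on `[0, ∞)` matter; extending `F` by `F 0` to the left makes it
continuous on `ℝ`, so the fundamental theorem of calculus applies even where `α t = 0`. -/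
theorem integral_eq_integral_max_zero {x : ℝ} (hx : 0 ≤ x) :
    ∫ s in (0 : ℝ)..x, F s = ∫ s in (0 : ℝ)..x, F (max s 0) :=
  integral_congr fun s hs => by
    rw [uIcc_of_le hx] at hs
    rw [max_eq_left hs.1]

theorem ContinuousOn.continuous_comp_max_zero (hF : ContinuousOn F (Ici 0)) :
    Continuous fun s => F (max s 0) :=
  hF.comp_continuous (by fun_prop) fun s => le_max_right s 0

theorem continuousOn_integral_comp (hF : ContinuousOn F (Ici 0)) {S : Set ℝ}
    (hα : ContinuousOn α S) (hα0 : MapsTo α S (Ici 0)) :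
    ContinuousOn (fun τ => ∫ s in (0 : ℝ)..α τ, F s) S :=
  ((continuous_primitive (fun _ _ => hF.continuous_comp_max_zero.intervalIntegrable _ _) 0
    ).comp_continuousOn hα).congr fun _ hτ => integral_eq_integral_max_zero (hα0 hτ)

theorem hasDerivAt_integral_comp (hF : ContinuousOn F (Ici 0)) {t α' : ℝ}
    (hα : HasDerivAt α α' t) (hα0 : ∀ᶠ τ in 𝓝 t, 0 ≤ α τ) :
    HasDerivAt (fun τ => ∫ s in (0 : ℝ)..α τ, F s) (F (α t) * α') t := by
  have h := (hF.continuous_comp_max_zero.integral_hasStrictDerivAt 0 (α t)).hasDerivAt.comp t hα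
  rw [max_eq_left hα0.self_of_nhds] at h
  exact h.congr_of_eventuallyEq (hα0.mono fun τ hτ => integral_eq_integral_max_zero hτ)

theorem monotoneOn_integral_of_nonneg (hF : ContinuousOn F (Ici 0))
    (hF0 : ∀ s ≥ 0, 0 ≤ F s) :
    MonotoneOn (fun x => ∫ s in (0 : ℝ)..x, F s) (Ici 0) := fun x hx y _ hxy =>
  integral_mono_interval le_rfl hx hxy
    (ae_restrict_of_forall_mem measurableSet_Ioc fun s hs => hF0 s hs.1.le)
    ((hF.mono (by rw [uIcc_of_le (hx.trans hxy)]; exact Icc_subset_Ici_self)).intervalIntegrable)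

theorem continuousOn_retardedIntegral (hF : ContinuousOn F (Ici 0))
    (hH : ContinuousOn H (Ici 0)) (hα : ContinuousOn α (Ici 0))
    (hα0 : MapsTo α (Ici 0) (Ici 0)) :
    ContinuousOn (retardedIntegral α F H) (Ici 0) :=
  (continuousOn_integral_comp hF hα hα0).add
    (continuousOn_integral_comp hH continuousOn_id (mapsTo_id _))

theorem hasDerivAt_retardedIntegral (hF : ContinuousOn F (Ici 0))
    (hH : ContinuousOn H (Ici 0)) (hα0 : MapsTo α (Ici 0) (Ici 0)) {t α' : ℝ} (ht : 0 < t)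
    (hα : HasDerivAt α α' t) :
    HasDerivAt (retardedIntegral α F H) (F (α t) * α' + H t) t := by
  have h0 : ∀ᶠ τ in 𝓝 t, τ ∈ Ici (0 : ℝ) := Ici_mem_nhds ht
  have h := (hasDerivAt_integral_comp hF hα (h0.mono fun _ hτ => hα0 hτ)).add
    (hasDerivAt_integral_comp hH (hasDerivAt_id' t) h0)
  rw [mul_one] at h
  exact h

theorem monotoneOn_retardedIntegral (hF : ContinuousOn F (Ici 0))
    (hH : ContinuousOn H (Ici 0)) (hF0 : ∀ s ≥ 0, 0 ≤ F s) (hH0 : ∀ s ≥ 0, 0 ≤ H s)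
    (hα : MonotoneOn α (Ici 0))
    (hα0 : MapsTo α (Ici 0) (Ici 0)) : MonotoneOn (retardedIntegral α F H) (Ici 0) :=
  ((monotoneOn_integral_of_nonneg hF hF0).comp hα hα0).add
    (monotoneOn_integral_of_nonneg hH hH0)

end RetardedIntegral

theorem integral_mul_le_of_monotoneOn {k : ℝ → ℝ → ℝ} {K : ℝ → ℝ} {t T b : ℝ}
    (hk : ContinuousOn (Function.uncurry k) (Ici 0 ×ˢ Ici 0)) (hK : ContinuousOn K (Ici 0))
    (hK0 : ∀ s ≥ 0, 0 ≤ K s) (hk_mono : ∀ s ≥ 0, MonotoneOn (fun t => k t s) (Ici 0))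
    (ht : 0 ≤ t) (htT : t ≤ T) (hb : 0 ≤ b) :
    ∫ s in (0 : ℝ)..b, k t s * K s ≤ ∫ s in (0 : ℝ)..b, k T s * K s := by
  have hint : ∀ τ ≥ 0, IntervalIntegrable (fun s => k τ s * K s) volume 0 b := fun τ hτ =>
    (((hk.uncurry_left τ hτ).mul hK).mono
      (by rw [uIcc_of_le hb]; exact Icc_subset_Ici_self)).intervalIntegrable
  exact integral_mono_on hb (hint t ht) (hint T (ht.trans htT)) fun s hs =>
    mul_le_mul_of_nonneg_right (hk_mono s hs.1 ht (ht.trans htT) htT) (hK0 s hs.1)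

theorem sub_le_sub_of_hasDerivAt_comp_le {Φ W z z' ρ r : ℝ → ℝ} {D : Set ℝ} {a b : ℝ}
    (hab : a ≤ b) (hΦ : ∀ x ∈ D, HasDerivAt Φ (1 / W x) x) (hW : ∀ x ∈ D, 0 < W x)
    (hz : ContinuousOn z (Icc a b)) (hzD : MapsTo z (Icc a b) D)
    (hz' : ∀ t ∈ Ioo a b, HasDerivAt z (z' t) t)
    (hρ : ContinuousOn ρ (Icc a b)) (hρ' : ∀ t ∈ Ioo a b, HasDerivAt ρ (r t) t)
    (hle : ∀ t ∈ Ioo a b, z' t ≤ r t * W (z t)) :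
    Φ (z b) - Φ (z a) ≤ ρ b - ρ a := by
  have hmono : MonotoneOn (fun t => ρ t - Φ (z t)) (Icc a b) := by
    refine monotoneOn_of_hasDerivWithinAt_nonneg (f' := fun t => r t - 1 / W (z t) * z' t)
      (convex_Icc a b) (hρ.sub fun t ht => ?_) (fun t ht => ?_) (fun t ht => ?_)
    · exact (hΦ _ (hzD ht)).continuousAt.comp_continuousWithinAt (hz t ht)
    · rw [interior_Icc] at ht
      exact ((hρ' t ht).sub ((hΦ _ (hzD (Ioo_subset_Icc_self ht))).comp t
        (hz' t ht))).hasDerivWithinAt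
    · rw [interior_Icc] at ht
      rw [sub_nonneg, one_div_mul_eq_div, div_le_iff₀ (hW _ (hzD (Ioo_subset_Icc_self ht)))]
      exact hle t ht
  have := hmono (left_mem_Icc.2 hab) (right_mem_Icc.2 hab) hab
  dsimp only at this
  linarith

theorem bihari_transform_hasDerivAt_and_le {φinv η w G Ginv Ψ : ℝ → ℝ} {x₀ x₁ : ℝ}
    (hφinv : ∀ q > 0, 0 < φinv q ∧ ContinuousAt φinv q)
    (hη_cont : ContinuousOn η (Ici 0)) (hη_pos : ∀ x > 0, 0 < η x)
    (hw_cont : ContinuousOn w (Ici 0)) (hw_pos : ∀ x > 0, 0 < w x)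
    (hx₀ : 0 ≤ x₀) (hx₁ : 0 < x₁)
    (hG : ∀ x, G x = ∫ s in x₀..x, 1 / η (φinv s)) (hG_div : Tendsto G atTop atTop)
    (hGinv_left : ∀ x ≥ x₀, Ginv (G x) = x)
    (hGinv_right : ∀ y ≥ 0, G (Ginv y) = y ∧ x₀ ≤ Ginv y)
    (hΨ : ∀ x, Ψ x = ∫ s in x₁..x, 1 / w (φinv (Ginv s))) :
    (∀ x > x₀, HasDerivAt (fun x => Ψ (G x)) (1 / (η (φinv x) * w (φinv x))) x) ∧
      ∀ x > x₀, ∀ y > 0, Ψ (G x) ≤ Ψ y → x ≤ Ginv y := by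
  obtain rfl : G = fun x => ∫ s in x₀..x, 1 / η (φinv s) := funext hG
  obtain rfl : Ψ = fun x => ∫ s in x₁..x, 1 / w (φinv (Ginv s)) := funext hΨ
  have hG_int : ∀ x ∈ Ici x₀, IntervalIntegrable (fun s => 1 / η (φinv s)) volume x₀ x :=
    fun x hx => intervalIntegrable_of_tendsto_integral_atTop hG_div hx
  have hG_mono := strictMonoOn_integral_of_pos ordConnected_Ici hG_int (by
    rw [interior_Ici]
    exact fun x hx => one_div_pos.2 (hη_pos _ (hφinv _ (hx₀.trans_lt hx)).1))
  have hG_pos : ∀ x > x₀, 0 < ∫ s in x₀..x, 1 / η (φinv s) := fun x hx => by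
    simpa using hG_mono self_mem_Ici hx.le hx
  obtain ⟨hGinv_mono, hGinv⟩ := hG_mono.monotoneOn_and_continuousAt_of_invOn_Ici (b := 0)
    ⟨hGinv_left, fun y hy => (hGinv_right y hy).1⟩
    (fun x hx => by simpa using hG_mono.monotoneOn self_mem_Ici hx hx)
    (fun y hy => (hGinv_right y hy).2)
  have hφinvGinv : ∀ q > 0, 0 < φinv (Ginv q) ∧ ContinuousAt (fun q => φinv (Ginv q)) q :=
    fun q hq =>
      have h := hφinv _ (hx₀.trans_lt (hGinv q hq).1)
      ⟨h.1, h.2.comp (hGinv q hq).2⟩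
  have hψ := continuousOn_one_div_comp hw_cont hw_pos hφinvGinv
  have hΨ_int : ∀ y ∈ Ioi (0 : ℝ),
      IntervalIntegrable (fun s => 1 / w (φinv (Ginv s))) volume x₁ y := fun y hy =>
    (hψ.mono (ordConnected_Ioi.uIcc_subset hx₁ hy)).intervalIntegrable
  have hΨ_mono := strictMonoOn_integral_of_pos ordConnected_Ioi hΨ_int (by
    rw [interior_Ioi]
    exact fun y hy => one_div_pos.2 (hw_pos _ (hφinvGinv y hy).1))
  refine ⟨fun x hx => ?_, fun x hx y hy hle => ?_⟩
  · have h := (hasDerivAt_integral_of_continuousOn isOpen_Ioi hψ (hG_pos x hx)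
      (hΨ_int _ (hG_pos x hx))).comp x (hasDerivAt_integral_of_continuousOn isOpen_Ioi
        (continuousOn_one_div_comp hη_cont hη_pos hφinv) (hx₀.trans_lt hx) (hG_int x hx.le))
    rwa [hGinv_left x hx.le, one_div_mul_one_div, mul_comm] at h
  · calc x = Ginv (∫ s in x₀..x, 1 / η (φinv s)) := (hGinv_left x hx.le).symm
      _ ≤ Ginv y :=
        hGinv_mono (hG_pos x hx).le hy.le ((hΨ_mono.le_iff_le (hG_pos x hx) hy).1 hle)

theorem le_add_retardedIntegral_of_le {V c α K : ℝ → ℝ} {f g : ℝ → ℝ → ℝ} {t T : ℝ}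
    (hc_mono : MonotoneOn c (Ici 0)) (hα_nonneg : ∀ t ≥ 0, 0 ≤ α t)
    (hf : ContinuousOn (Function.uncurry f) (Ici 0 ×ˢ Ici 0))
    (hf_mono : ∀ s ≥ 0, MonotoneOn (f · s) (Ici 0))
    (hg : ContinuousOn (Function.uncurry g) (Ici 0 ×ˢ Ici 0))
    (hg_mono : ∀ s ≥ 0, MonotoneOn (g · s) (Ici 0))
    (hK : ContinuousOn K (Ici 0)) (hK_nonneg : ∀ s ≥ 0, 0 ≤ K s)
    (hV : ∀ t ≥ 0,
      V t ≤ c t + (∫ s in (0 : ℝ)..α t, f t s * K s) + ∫ s in (0 : ℝ)..t, g t s * K s)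
    (ht : 0 ≤ t) (htT : t ≤ T) :
    V t ≤ c T + retardedIntegral α (fun s => f T s * K s) (fun s => g T s * K s) t := by
  have hf_le := integral_mul_le_of_monotoneOn hf hK hK_nonneg hf_mono ht htT (hα_nonneg t ht)
  have hg_le := integral_mul_le_of_monotoneOn hg hK hK_nonneg hg_mono ht htT ht
  have hc_le := hc_mono ht (ht.trans htT) htT
  have := hV t ht
  rw [retardedIntegral]
  linarith

theorem hasDerivAt_deriv_nonneg_of_monotoneOn {α : ℝ → ℝ} (hα : ContDiffOn ℝ 1 α (Ici 0))
    (hα_mono : MonotoneOn α (Ici 0)) {t : ℝ} (ht : 0 < t) :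
    HasDerivAt α (deriv α t) t ∧ 0 ≤ deriv α t := by
  refine ⟨((hα.differentiableOn one_ne_zero t ht.le).differentiableAt
    (Ici_mem_nhds ht)).hasDerivAt, ?_⟩
  rw [← derivWithin_of_isOpen isOpen_Ioi ht]
  exact (hα_mono.mono Ioi_subset_Ici_self).derivWithin_nonneg

theorem exists_le_of_retarded_integral_le {V c α K W Φ : ℝ → ℝ} {f g : ℝ → ℝ → ℝ}
    {x₀ T : ℝ} (hT : 0 ≤ T) (hc_mono : MonotoneOn c (Ici 0)) (hx₀ : x₀ < c 0)
    (hα : ContDiffOn ℝ 1 α (Ici 0)) (hα_mono : MonotoneOn α (Ici 0))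
    (hα_nonneg : ∀ t ≥ 0, 0 ≤ α t) (hα_le : ∀ t ≥ 0, α t ≤ t)
    (hf : ContinuousOn (Function.uncurry f) (Ici 0 ×ˢ Ici 0))
    (hf_nonneg : ∀ t ≥ 0, ∀ s ≥ 0, 0 ≤ f t s)
    (hf_mono : ∀ s ≥ 0, MonotoneOn (f · s) (Ici 0))
    (hg : ContinuousOn (Function.uncurry g) (Ici 0 ×ˢ Ici 0))
    (hg_nonneg : ∀ t ≥ 0, ∀ s ≥ 0, 0 ≤ g t s)
    (hg_mono : ∀ s ≥ 0, MonotoneOn (g · s) (Ici 0))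
    (hK : ContinuousOn K (Ici 0)) (hK_nonneg : ∀ s ≥ 0, 0 ≤ K s)
    (hKW : ∀ s ≥ 0, ∀ x > x₀, V s ≤ x → K s ≤ W x)
    (hW : ∀ x > x₀, 0 < W x) (hΦ : ∀ x > x₀, HasDerivAt Φ (1 / W x) x)
    (hV : ∀ t ≥ 0,
      V t ≤ c t + (∫ s in (0 : ℝ)..α t, f t s * K s) + ∫ s in (0 : ℝ)..t, g t s * K s) :
    ∃ z > x₀, V T ≤ z ∧ Φ z ≤ Φ (c T) + retardedIntegral α (f T) (g T) T := by
  have hα0 : MapsTo α (Ici 0) (Ici 0) := hα_nonneg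
  have hα_zero : α 0 = 0 := le_antisymm (hα_le 0 le_rfl) (hα_nonneg 0 le_rfl)
  have hα' := fun t (ht : 0 < t) => hasDerivAt_deriv_nonneg_of_monotoneOn hα hα_mono ht
  have hfT := hf.uncurry_left T hT
  have hgT := hg.uncurry_left T hT
  have hfK := hfT.mul hK
  have hgK := hgT.mul hK
  set z := fun t => c T + retardedIntegral α (fun s => f T s * K s) (fun s => g T s * K s) t
  have hz_mono : MonotoneOn z (Ici 0) :=
    (monotoneOn_retardedIntegral hfK hgK
      (fun s hs => mul_nonneg (hf_nonneg T hT s hs) (hK_nonneg s hs))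
      (fun s hs => mul_nonneg (hg_nonneg T hT s hs) (hK_nonneg s hs)) hα_mono hα0).const_add _
  have hz_zero : z 0 = c T := by simp [z, retardedIntegral_zero hα_zero]
  have hz_gt : ∀ t ≥ 0, x₀ < z t := fun t ht =>
    (hx₀.trans_le (hc_mono self_mem_Ici hT hT)).trans_le (hz_zero ▸ hz_mono self_mem_Ici ht ht)
  have hVz : ∀ t ∈ Icc 0 T, V t ≤ z t := fun t ht =>
    le_add_retardedIntegral_of_le hc_mono hα_nonneg hf hf_mono hg hg_mono hK hK_nonneg hV
      ht.1 ht.2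
  have hK_le : ∀ t ∈ Icc 0 T, ∀ s ∈ Icc 0 t, K s ≤ W (z t) := fun t ht s hs =>
    hKW s hs.1 _ (hz_gt t ht.1) ((hVz s ⟨hs.1, hs.2.trans ht.2⟩).trans (hz_mono hs.1 ht.1 hs.2))
  have hz'_le : ∀ t ∈ Ioo 0 T, f T (α t) * K (α t) * deriv α t + g T t * K t ≤
      (f T (α t) * deriv α t + g T t) * W (z t) := by
    rintro t ⟨ht, htT⟩
    have hKα := hK_le t ⟨ht.le, htT.le⟩ (α t) ⟨hα_nonneg t ht.le, hα_le t ht.le⟩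
    have hKt := hK_le t ⟨ht.le, htT.le⟩ t ⟨ht.le, le_rfl⟩
    have := hf_nonneg T hT (α t) (hα_nonneg t ht.le)
    have := hg_nonneg T hT t ht.le
    have := (hα' t ht).2
    calc f T (α t) * K (α t) * deriv α t + g T t * K t
        ≤ f T (α t) * W (z t) * deriv α t + g T t * W (z t) := by gcongr
      _ = (f T (α t) * deriv α t + g T t) * W (z t) := by ring
  have hbound := sub_le_sub_of_hasDerivAt_comp_le (z := z) hT hΦ hW
    ((continuousOn_const.add (continuousOn_retardedIntegral hfK hgK hα.continuousOn hα0)).mono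
      Icc_subset_Ici_self) (fun t ht => hz_gt t ht.1)
    (fun t ht => (hasDerivAt_retardedIntegral hfK hgK hα0 ht.1 (hα' t ht.1).1).const_add _)
    ((continuousOn_retardedIntegral hfT hgT hα.continuousOn hα0).mono Icc_subset_Ici_self)
    (fun t ht => hasDerivAt_retardedIntegral hfT hgT hα0 ht.1 (hα' t ht.1).1) hz'_le
  rw [hz_zero, retardedIntegral_zero hα_zero] at hbound
  exact ⟨z T, hz_gt T hT, hVz T ⟨hT, le_rfl⟩, by linarith⟩

/-- Membership of the argument in `Dom(Ψ⁻¹)` is encoded as `∃ y > 0, Ψ y = …`, and `Ψ⁻¹(…)`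
is that `y`. -/
theorem thm2_retarded_inequality_general
    (u c α : ℝ → ℝ) (f g : ℝ → ℝ → ℝ) (φ φinv η w G Ginv Ψ : ℝ → ℝ)
    (x₀ x₁ τ : ℝ)
    (hu_cont : ContinuousOn u (Ici 0)) (hu_nonneg : ∀ t ≥ (0:ℝ), 0 ≤ u t)
    (hc_mono : MonotoneOn c (Ici 0))
    (hα_C1 : ContDiffOn ℝ 1 α (Ici 0)) (hα_mono : MonotoneOn α (Ici 0))
    (hα_nonneg : ∀ t ≥ (0:ℝ), 0 ≤ α t) (hα_le : ∀ t ≥ (0:ℝ), α t ≤ t)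
    (hf_cont : ContinuousOn (Function.uncurry f) (Ici 0 ×ˢ Ici 0))
    (hf_nonneg : ∀ t ≥ (0:ℝ), ∀ s ≥ (0:ℝ), 0 ≤ f t s)
    (hf_mono : ∀ s ≥ (0:ℝ), MonotoneOn (fun t => f t s) (Ici 0))
    (hg_cont : ContinuousOn (Function.uncurry g) (Ici 0 ×ˢ Ici 0))
    (hg_nonneg : ∀ t ≥ (0:ℝ), ∀ s ≥ (0:ℝ), 0 ≤ g t s)
    (hg_mono : ∀ s ≥ (0:ℝ), MonotoneOn (fun t => g t s) (Ici 0))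
    (hφ_mono : StrictMonoOn φ (Ici 0))
    (hφ_bij : BijOn φ (Ici 0) (Ici 0))
    (hφinv_left : ∀ x ≥ (0:ℝ), φinv (φ x) = x)
    (hφinv_right : ∀ y ≥ (0:ℝ), φ (φinv y) = y)
    (hη_cont : ContinuousOn η (Ici 0)) (hη_mono : MonotoneOn η (Ici 0))
    (hη_pos : ∀ x > (0:ℝ), 0 < η x)
    (hw_cont : ContinuousOn w (Ici 0)) (hw_mono : MonotoneOn w (Ici 0))
    (hw_pos : ∀ x > (0:ℝ), 0 < w x)
    (hx₀_nonneg : 0 ≤ x₀) (hx₀_lt : x₀ < c 0) (hx₁ : 0 < x₁)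
    (hG : ∀ x, G x = ∫ s in x₀..x, 1 / η (φinv s))
    (hG_div : Tendsto G atTop atTop)
    (hGinv_left : ∀ x ≥ x₀, Ginv (G x) = x)
    (hGinv_right : ∀ y ≥ (0:ℝ), G (Ginv y) = y ∧ x₀ ≤ Ginv y)
    (hΨ : ∀ x, Ψ x = ∫ s in x₁..x, 1 / w (φinv (Ginv s)))
    (hmain : ∀ t ≥ (0:ℝ),
      φ (u t) ≤ c t + (∫ s in (0:ℝ)..(α t), f t s * η (u s) * w (u s))
        + ∫ s in (0:ℝ)..t, g t s * η (u s) * w (u s))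
    (hdom : ∀ t ∈ Icc (0:ℝ) τ, ∃ y > (0:ℝ),
      Ψ y = Ψ (G (c t)) + (∫ s in (0:ℝ)..(α t), f t s)
        + ∫ s in (0:ℝ)..t, g t s) :
    ∀ t ∈ Icc (0:ℝ) τ,
      ∃ y > (0:ℝ), Ψ y = Ψ (G (c t)) + (∫ s in (0:ℝ)..(α t), f t s)
          + (∫ s in (0:ℝ)..t, g t s) ∧
        u t ≤ φinv (Ginv y) := by
  intro T hT
  obtain ⟨y, hy, hy_eq⟩ := hdom T hT
  refine ⟨y, hy, hy_eq, ?_⟩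
  have hφinv_maps : MapsTo φinv (Ici 0) (Ici 0) := fun q hq => by
    obtain ⟨x, hx, rfl⟩ := hφ_bij.surjOn hq
    rwa [hφinv_left x hx]
  obtain ⟨hφinv_mono, hφinv⟩ :=
    hφ_mono.monotoneOn_and_continuousAt_of_invOn_Ici ⟨hφinv_left, hφinv_right⟩ hφ_bij.mapsTo
      hφinv_maps
  obtain ⟨hΦ, hΦ_le⟩ := bihari_transform_hasDerivAt_and_le hφinv hη_cont hη_pos hw_cont hw_pos
    hx₀_nonneg hx₁ hG hG_div hGinv_left hGinv_right hΨ
  have hη_nonneg := hη_cont.nonneg_of_pos hη_pos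
  have hw_nonneg := hw_cont.nonneg_of_pos hw_pos
  have hηw_mono : MonotoneOn (η * w) (Ici 0) := hη_mono.mul hw_mono hη_nonneg hw_nonneg
  have hu_le : ∀ s ≥ 0, ∀ x ≥ 0, φ (u s) ≤ x → u s ≤ φinv x := fun s hs x hx hux =>
    hφinv_left (u s) (hu_nonneg s hs) ▸ hφinv_mono (hφ_bij.mapsTo (hu_nonneg s hs)) hx hux
  obtain ⟨z, hz, huz, hz_le⟩ := exists_le_of_retarded_integral_le (V := fun t => φ (u t))
    (K := fun s => η (u s) * w (u s)) (W := fun x => η (φinv x) * w (φinv x))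
    hT.1 hc_mono hx₀_lt hα_C1 hα_mono hα_nonneg hα_le
    hf_cont hf_nonneg hf_mono hg_cont hg_nonneg hg_mono
    ((hη_cont.comp hu_cont hu_nonneg).mul (hw_cont.comp hu_cont hu_nonneg))
    (fun s hs => mul_nonneg (hη_nonneg _ (hu_nonneg s hs)) (hw_nonneg _ (hu_nonneg s hs)))
    (fun s hs x hx hux => hηw_mono (hu_nonneg s hs) (hφinv_maps (hx₀_nonneg.trans hx.le))
      (hu_le s hs x (hx₀_nonneg.trans hx.le) hux))
    (fun x hx =>
      have hφx := (hφinv x (hx₀_nonneg.trans_lt hx)).1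
      mul_pos (hη_pos _ hφx) (hw_pos _ hφx))
    hΦ (fun t ht => by simpa only [mul_assoc] using hmain t ht)
  have hz_Ginv : z ≤ Ginv y :=
    hΦ_le z hz y hy (by rw [hy_eq]; simpa [retardedIntegral, add_assoc] using hz_le)
  calc u T ≤ φinv z := hu_le T hT.1 z (hx₀_nonneg.trans hz.le) huz
    _ ≤ φinv (Ginv y) := hφinv_mono (hx₀_nonneg.trans hz.le)
        (hx₀_nonneg.trans (hGinv_right y hy.le).2) hz_Ginv

/-- Theorem 2: second retarded integral inequality.  Conventions on inverse
functions are as in Theorem 1: `φinv` is the two-sided inverse of `φ` on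
`[0,∞)`, `Ginv` the inverse of `G`, membership of
`Ψ(G(c t)) + ∫₀^{α t} f + ∫₀^t g` in `Dom(Ψ⁻¹)` is expressed as
`∃ y > 0, Ψ y = …`, and the bound `u t ≤ φ⁻¹(G⁻¹(Ψ⁻¹(…)))` as
`u t ≤ φinv (Ginv y)`.  Here `τ > 0` is assumed to be chosen so that the
argument lies in the domain of `Ψ⁻¹` for all `t ∈ [0,τ]`. -/
theorem thm2_retarded_inequality
    (u c α : ℝ → ℝ) (f g : ℝ → ℝ → ℝ) (φ φinv η w G Ginv Ψ : ℝ → ℝ)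
    (x₀ x₁ τ : ℝ)
    (hu_cont : ContinuousOn u (Ici 0)) (hu_nonneg : ∀ t ≥ (0:ℝ), 0 ≤ u t)
    (hc_cont : ContinuousOn c (Ici 0)) (hc_pos : ∀ t ≥ (0:ℝ), 0 < c t)
    (hc_mono : MonotoneOn c (Ici 0))
    (hα_C1 : ContDiffOn ℝ 1 α (Ici 0)) (hα_mono : MonotoneOn α (Ici 0))
    (hα_nonneg : ∀ t ≥ (0:ℝ), 0 ≤ α t) (hα_le : ∀ t ≥ (0:ℝ), α t ≤ t)
    (hf_cont : ContinuousOn (Function.uncurry f) (Ici 0 ×ˢ Ici 0))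
    (hf_nonneg : ∀ t ≥ (0:ℝ), ∀ s ≥ (0:ℝ), 0 ≤ f t s)
    (hf_mono : ∀ s ≥ (0:ℝ), MonotoneOn (fun t => f t s) (Ici 0))
    (hg_cont : ContinuousOn (Function.uncurry g) (Ici 0 ×ˢ Ici 0))
    (hg_nonneg : ∀ t ≥ (0:ℝ), ∀ s ≥ (0:ℝ), 0 ≤ g t s)
    (hg_mono : ∀ s ≥ (0:ℝ), MonotoneOn (fun t => g t s) (Ici 0))
    (hφ_cont : ContinuousOn φ (Ici 0)) (hφ_mono : StrictMonoOn φ (Ici 0))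
    (hφ_bij : BijOn φ (Ici 0) (Ici 0))
    (hφinv_left : ∀ x ≥ (0:ℝ), φinv (φ x) = x)
    (hφinv_right : ∀ y ≥ (0:ℝ), φ (φinv y) = y)
    (hη_cont : ContinuousOn η (Ici 0)) (hη_mono : MonotoneOn η (Ici 0))
    (hη_pos : ∀ x > (0:ℝ), 0 < η x)
    (hw_cont : ContinuousOn w (Ici 0)) (hw_mono : MonotoneOn w (Ici 0))
    (hw_pos : ∀ x > (0:ℝ), 0 < w x)
    (hx₀_nonneg : 0 ≤ x₀) (hx₀_lt : x₀ < c 0) (hx₁ : 0 < x₁)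
    (hG : ∀ x, G x = ∫ s in x₀..x, 1 / η (φinv s))
    (hG_div : Tendsto G atTop atTop)
    (hGinv_left : ∀ x ≥ x₀, Ginv (G x) = x)
    (hGinv_right : ∀ y ≥ (0:ℝ), G (Ginv y) = y ∧ x₀ ≤ Ginv y)
    (hΨ : ∀ x, Ψ x = ∫ s in x₁..x, 1 / w (φinv (Ginv s)))
    (hmain : ∀ t ≥ (0:ℝ),
      φ (u t) ≤ c t + (∫ s in (0:ℝ)..(α t), f t s * η (u s) * w (u s))
        + ∫ s in (0:ℝ)..t, g t s * η (u s) * w (u s))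
    (hτ : 0 < τ)
    (hdom : ∀ t ∈ Icc (0:ℝ) τ, ∃ y > (0:ℝ),
      Ψ y = Ψ (G (c t)) + (∫ s in (0:ℝ)..(α t), f t s)
        + ∫ s in (0:ℝ)..t, g t s) :
    ∀ t ∈ Icc (0:ℝ) τ,
      ∃ y > (0:ℝ), Ψ y = Ψ (G (c t)) + (∫ s in (0:ℝ)..(α t), f t s)
          + (∫ s in (0:ℝ)..t, g t s) ∧
        u t ≤ φinv (Ginv y) :=
  thm2_retarded_inequality_general u c α f g φ φinv η w G Ginv Ψ x₀ x₁ τ hu_cont hu_nonneg hc_mono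
    hα_C1 hα_mono hα_nonneg hα_le hf_cont hf_nonneg hf_mono hg_cont hg_nonneg hg_mono hφ_mono hφ_bij
    hφinv_left hφinv_right hη_cont hη_mono hη_pos hw_cont hw_mono hw_pos hx₀_nonneg hx₀_lt hx₁ hG
    hG_div hGinv_left hGinv_right hΨ hmain hdom
end

section
/- Let m > n > 0, c > 0, let u : [0,∞) → [0,∞) be continuous, let α ∈ C¹([0,∞),[0,∞)) be nondecreasing with α(t) ≤ t, let f, g : [0,∞) → [0,∞) be continuous, and let w : [0,∞) → [0,∞) be continuous nondecreasing with w(x) > 0 for x > 0. Suppose u^m(t) ≤ c^{m/(m−n)} + (m/(m−n)) ∫_0^{α(t)} [f(s) u^n(s) w(u(s)) + g(s) u^n(s)] ds for all t ≥ 0. Define Ψ(x) = ∫_1^x ds/w(s^{1/(m−n)}) for x > 0. Then there exists τ > 0 such that for t ∈ [0,τ], Ψ(c + ∫_0^{α(t)} g(s) ds) + ∫_0^{α(t)} f(s) ds lies in the domain of Ψ⁻¹ and u(t) ≤ [Ψ⁻¹(Ψ(c + ∫_0^{α(t)} g(s) ds) + ∫_0^{α(t)} f(s) ds)]^{1/(m−n)}.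 -/
open Set intervalIntegral MeasureTheory

/-! With `k = m - n`, let `z(t)` be the right-hand side of the hypothesis with upper limit `t`
instead of `α t`. Since `α t ≤ t` and `z` is nondecreasing, `u ≤ z ^ (1/m)`, and then
`B = z ^ (k/m)` satisfies `B' ≤ f · w(B ^ (1/k)) + g`. A Bihari-type comparison for this
differential inequality gives `Ψ(B r) ≤ Ψ(c + ∫₀ʳ g) + ∫₀ʳ f`. For small `r` the right-hand side
stays below `Ψ(c + 1)`, so the intermediate value theorem yields `y ≥ B r` with `Ψ y` equal to it,
and `u ≤ B ^ (1/k) ≤ y ^ (1/k)`. -/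

section Primitive

variable {f : ℝ → ℝ} {a b x : ℝ}

theorem ContinuousOn.continuousOn_primitive_Icc (hf : ContinuousOn f (Icc a b)) :
    ContinuousOn (fun x => ∫ t in a..x, f t) (Icc a b) := by
  rcases le_or_gt a b with hab | hba
  · have := continuousOn_primitive_interval (μ := volume) (f := f) (a := a) (b := b)
    rw [uIcc_of_le hab] at this
    exact this hf.integrableOn_Icc
  · simp [Icc_eq_empty_of_lt hba]

theorem ContinuousOn.hasDerivAt_primitive (hf : ContinuousOn f (Icc a b)) (hx : x ∈ Ioo a b) :
    HasDerivAt (fun x => ∫ t in a..x, f t) (f x) x :=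
  integral_hasDerivAt_right
    ((hf.mono (Icc_subset_Icc_right hx.2.le)).intervalIntegrable_of_Icc hx.1.le)
    ((hf.mono Ioo_subset_Icc_self).stronglyMeasurableAtFilter isOpen_Ioo x hx)
    (hf.continuousAt (Icc_mem_nhds hx.1 hx.2))

theorem ContinuousOn.hasDerivAt_integral_Ioi (hf : ContinuousOn f (Ioi 0)) (ha : 0 < a)
    (hx : 0 < x) : HasDerivAt (fun x => ∫ t in a..x, f t) (f x) x :=
  integral_hasDerivAt_right
    ((hf.mono fun _ hy => (lt_min ha hx).trans_le hy.1).intervalIntegrable)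
    (hf.stronglyMeasurableAtFilter isOpen_Ioi x hx) (hf.continuousAt (Ioi_mem_nhds hx))

theorem ContinuousOn.strictMonoOn_integral_Ioi (hf : ContinuousOn f (Ioi 0))
    (hf_pos : ∀ x > 0, 0 < f x) (ha : 0 < a) :
    StrictMonoOn (fun x => ∫ t in a..x, f t) (Ioi 0) :=
  strictMonoOn_of_hasDerivWithinAt_pos (convex_Ioi 0)
    (fun _ hx => (hf.hasDerivAt_integral_Ioi ha hx).continuousAt.continuousWithinAt)
    (fun _ hx => (hf.hasDerivAt_integral_Ioi ha (interior_subset hx)).hasDerivWithinAt)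
    (fun x hx => hf_pos x (interior_subset hx))

theorem ContinuousOn.continuousWithinAt_primitive_Ici (hf : ContinuousOn f (Ici a)) :
    ContinuousWithinAt (fun x => ∫ t in a..x, f t) (Ici a) a := by
  have := (hf.mono Icc_subset_Ici_self).continuousOn_primitive_Icc (b := a + 1) a
    (left_mem_Icc.2 (by linarith))
  rwa [ContinuousWithinAt, nhdsWithin_Icc_eq_nhdsGE (by linarith)] at this

theorem ContinuousOn.exists_pos_forall_Icc_integral_lt {φ g : ℝ → ℝ} {c : ℝ}
    (hφ : ContinuousOn φ (Ioi 0)) (hφ_pos : ∀ x > 0, 0 < φ x) (hf : ContinuousOn f (Ici 0))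
    (hg : ContinuousOn g (Ici 0)) (hc : 0 < c) :
    ∃ τ > 0, ∀ r ∈ Icc 0 τ, (∫ x in (1:ℝ)..(c + ∫ s in (0:ℝ)..r, g s), φ x) +
      (∫ s in (0:ℝ)..r, f s) < ∫ x in (1:ℝ)..(c + 1), φ x := by
  have hc' : 0 < c + ∫ s in (0:ℝ)..0, g s := by simpa using hc
  have hH := ((hφ.hasDerivAt_integral_Ioi one_pos hc').continuousAt.comp_continuousWithinAt
    (f := fun r => c + ∫ s in (0:ℝ)..r, g s) (hg.continuousWithinAt_primitive_Ici.const_add c)).add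
    hf.continuousWithinAt_primitive_Ici
  have hH0 : (∫ x in (1:ℝ)..(c + ∫ s in (0:ℝ)..0, g s), φ x) + (∫ s in (0:ℝ)..0, f s) <
      ∫ x in (1:ℝ)..(c + 1), φ x := by
    simpa using hφ.strictMonoOn_integral_Ioi hφ_pos one_pos hc (by linarith : 0 < c + 1)
      (lt_add_one c)
  exact mem_nhdsGE_iff_exists_Icc_subset.1 (hH.eventually_lt_const hH0)

end Primitive

theorem MonotoneOn.exists_mem_Icc_eq {φ : ℝ → ℝ} {s : Set ℝ} [s.OrdConnected] {x z T : ℝ}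
    (hφ : ContinuousOn φ s) (hφ_mono : MonotoneOn φ s) (hx : x ∈ s) (hz : z ∈ s)
    (hxT : φ x ≤ T) (hTz : T < φ z) : ∃ y ∈ Icc x z, φ y = T := by
  have hxz : x ≤ z := le_of_not_ge fun hzx => (hTz.trans_le (hφ_mono hz hx hzx)).not_ge hxT
  exact intermediate_value_Icc hxz (hφ.mono (‹s.OrdConnected›.out hx hz)) ⟨hxT, hTz.le⟩

theorem integral_one_div_le_of_hasDerivAt_le {W f g B B' : ℝ → ℝ} {a b : ℝ} (hab : a ≤ b)
    (hW : ContinuousOn W (Ioi 0)) (hW_pos : ∀ x > 0, 0 < W x) (hW_mono : MonotoneOn W (Ioi 0))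
    (hf : ContinuousOn f (Icc a b)) (hf_nonneg : ∀ s ∈ Ioo a b, 0 ≤ f s)
    (hg : ContinuousOn g (Icc a b)) (hg_nonneg : ∀ s ∈ Icc a b, 0 ≤ g s)
    (hB : ContinuousOn B (Icc a b)) (hB_pos : ∀ s ∈ Icc a b, 0 < B s)
    (hB' : ∀ s ∈ Ioo a b, HasDerivAt B (B' s) s)
    (hB'_le : ∀ s ∈ Ioo a b, B' s ≤ f s * W (B s) + g s) :
    ∫ x in (1:ℝ)..B b, 1 / W x ≤
      (∫ x in (1:ℝ)..(B a + ∫ s in a..b, g s), 1 / W x) + ∫ s in a..b, f s := by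
  have hφ : ContinuousOn (fun x => 1 / W x) (Ioi 0) :=
    continuousOn_const.div hW fun x hx => (hW_pos x hx).ne'
  set Φ := fun y => ∫ x in (1:ℝ)..y, 1 / W x
  -- shifting `B` by `∫ₛᵇ g` cancels the `g`-term of `B'`, leaving a pure Bihari inequality for `D`
  set D := fun s => B s + ((∫ t in a..b, g t) - ∫ t in a..s, g t)
  have hBD : ∀ s ∈ Icc a b, B s ≤ D s := fun s hs => by
    have : (∫ t in a..s, g t) ≤ ∫ t in a..b, g t :=
      integral_mono_interval le_rfl hs.1 hs.2
        (ae_restrict_of_forall_mem measurableSet_Ioc fun t ht =>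
          hg_nonneg t (Ioc_subset_Icc_self ht))
        (hg.intervalIntegrable_of_Icc hab)
    simp only [D]; linarith
  have hD_pos : ∀ s ∈ Icc a b, 0 < D s := fun s hs => (hB_pos s hs).trans_le (hBD s hs)
  have hE_mono : MonotoneOn (fun s => (∫ t in a..s, f t) - Φ (D s)) (Icc a b) := by
    refine monotoneOn_of_hasDerivWithinAt_nonneg (convex_Icc a b)
      (f' := fun s => f s - 1 / W (D s) * (B' s + (0 - g s)))
      (hf.continuousOn_primitive_Icc.sub (ContinuousOn.comp (g := Φ) (t := Ioi 0)
        (fun y hy => (hφ.hasDerivAt_integral_Ioi one_pos hy).continuousAt.continuousWithinAt)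
        (hB.add (continuousOn_const.sub hg.continuousOn_primitive_Icc)) hD_pos))
      (fun s hs => ?_) (fun s hs => ?_)
    all_goals rw [interior_Icc] at hs
    · have hD' := (hB' s hs).add
        ((hasDerivAt_const s (∫ t in a..b, g t)).sub (hg.hasDerivAt_primitive hs))
      exact ((hf.hasDerivAt_primitive hs).sub ((hφ.hasDerivAt_integral_Ioi one_pos
        (hD_pos s (Ioo_subset_Icc_self hs))).comp s hD')).hasDerivWithinAt
    · have hWD := hW_pos _ (hD_pos s (Ioo_subset_Icc_self hs))
      have hD'_le : B' s + (0 - g s) ≤ f s * W (D s) := by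
        have hW_le := mul_le_mul_of_nonneg_left (hW_mono (hB_pos s (Ioo_subset_Icc_self hs))
          (hD_pos s (Ioo_subset_Icc_self hs)) (hBD s (Ioo_subset_Icc_self hs))) (hf_nonneg s hs)
        linarith [hB'_le s hs]
      rwa [sub_nonneg, one_div_mul_eq_div, div_le_iff₀ hWD]
  have hE := hE_mono (left_mem_Icc.2 hab) (right_mem_Icc.2 hab) hab
  simp only [D, Φ, integral_same, sub_zero, sub_self, add_zero] at hE
  linarith

theorem mul_rpow_mul_rpow_neg_le {a b x y n : ℝ} (hn : 0 ≤ n) (hx : 0 ≤ x) (hxy : x ≤ y)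
    (hy : 0 < y) (hab : a ≤ b) (hb : 0 ≤ b) : a * x ^ n * y ^ (-n) ≤ b := by
  have hθ : 0 ≤ x ^ n * y ^ (-n) := by positivity
  have hθ_le : x ^ n * y ^ (-n) ≤ 1 := by
    rw [Real.rpow_neg hy.le, ← div_eq_mul_inv, div_le_one (by positivity)]
    exact Real.rpow_le_rpow hx hxy hn
  rw [mul_assoc]
  calc a * (x ^ n * y ^ (-n)) ≤ max a 0 * (x ^ n * y ^ (-n)) :=
        mul_le_mul_of_nonneg_right (le_max_left _ _) hθ
    _ ≤ max a 0 := mul_le_of_le_one_right (le_max_right _ _) hθ_le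
    _ ≤ b := max_le hab hb

theorem rpow_div_rpow_one_div {z k m : ℝ} (hz : 0 ≤ z) (hk : k ≠ 0) :
    (z ^ (k / m)) ^ (1 / k) = z ^ m⁻¹ := by
  rw [← Real.rpow_mul hz, div_mul_div_comm, mul_one, mul_comm, ← div_div, div_self hk, one_div]

section CompRpow

variable {w : ℝ → ℝ} {q : ℝ}

theorem ContinuousOn.comp_rpow (hw : ContinuousOn w (Ici 0)) (hq : 0 ≤ q) :
    ContinuousOn (fun x => w (x ^ q)) (Ioi 0) :=
  hw.comp (continuousOn_id.rpow_const fun _ _ => Or.inr hq)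
    fun _ hx => Real.rpow_nonneg (le_of_lt hx) q

theorem MonotoneOn.comp_rpow (hw : MonotoneOn w (Ici 0)) (hq : 0 ≤ q) :
    MonotoneOn (fun x => w (x ^ q)) (Ioi 0) := fun _ hx _ hy hxy =>
  hw (Real.rpow_nonneg (le_of_lt hx) q) (Real.rpow_nonneg (le_of_lt hy) q)
    (Real.rpow_le_rpow (le_of_lt hx) hxy hq)

end CompRpow

noncomputable def sunIntegrand (n : ℝ) (u f g w : ℝ → ℝ) (s : ℝ) : ℝ :=
  f s * u s ^ n * w (u s) + g s * u s ^ n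

noncomputable def sunRHS (m n c : ℝ) (u f g w : ℝ → ℝ) (r : ℝ) : ℝ :=
  c ^ (m / (m - n)) + (m / (m - n)) * ∫ s in (0:ℝ)..r, sunIntegrand n u f g w s

section Sun

variable {m n c : ℝ} {u f g w : ℝ → ℝ}

theorem continuousOn_sunIntegrand (hn : 0 ≤ n) (hu : ContinuousOn u (Ici 0))
    (hu_nonneg : ∀ s ≥ (0:ℝ), 0 ≤ u s) (hf : ContinuousOn f (Ici 0))
    (hg : ContinuousOn g (Ici 0)) (hw : ContinuousOn w (Ici 0)) :
    ContinuousOn (sunIntegrand n u f g w) (Ici 0) := by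
  have hun : ContinuousOn (fun s => u s ^ n) (Ici 0) := hu.rpow_const fun _ _ => Or.inr hn
  exact ((hf.mul hun).mul (hw.comp hu hu_nonneg)).add (hg.mul hun)

theorem sunIntegrand_nonneg (hn : 0 < n) (hw_pos : ∀ x > (0:ℝ), 0 < w x) {s : ℝ}
    (hu : 0 ≤ u s) (hf : 0 ≤ f s) (hg : 0 ≤ g s) : 0 ≤ sunIntegrand n u f g w s := by
  rcases hu.eq_or_lt with hu0 | hu_pos
  · simp [sunIntegrand, ← hu0, Real.zero_rpow hn.ne']
  · have := hw_pos _ hu_pos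
    unfold sunIntegrand
    positivity

theorem monotoneOn_sunRHS (hn : 0 ≤ n) (hmn : n < m)
    (hh : ContinuousOn (sunIntegrand n u f g w) (Ici 0))
    (hh_nonneg : ∀ s ≥ (0:ℝ), 0 ≤ sunIntegrand n u f g w s) :
    MonotoneOn (sunRHS m n c u f g w) (Ici 0) := fun r hr r' hr' hrr' => by
  have : 0 ≤ m / (m - n) := div_nonneg (hn.trans hmn.le) (sub_pos.2 hmn).le
  unfold sunRHS
  gcongr
  exact integral_mono_interval le_rfl hr hrr'
    (ae_restrict_of_forall_mem measurableSet_Ioc fun s hs => hh_nonneg s hs.1.le)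
    ((hh.mono Icc_subset_Ici_self).intervalIntegrable_of_Icc hr')

theorem sunRHS_zero : sunRHS m n c u f g w 0 = c ^ (m / (m - n)) := by
  simp [sunRHS]

theorem sunRHS_pos (hc : 0 < c) (hZ_mono : MonotoneOn (sunRHS m n c u f g w) (Ici 0)) {r : ℝ}
    (hr : 0 ≤ r) : 0 < sunRHS m n c u f g w r :=
  (Real.rpow_pos_of_pos hc _).trans_le (sunRHS_zero ▸ hZ_mono (le_refl (0:ℝ)) hr hr)

theorem sunRHS_rpow_deriv_le {z x φ γ : ℝ} (hn : 0 ≤ n) (hmn : n < m) (hz : 0 < z) (hx : 0 ≤ x)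
    (hxz : x ≤ z ^ m⁻¹) (hφ : 0 ≤ φ) (hγ : 0 ≤ γ) (hw_mono : MonotoneOn w (Ici 0))
    (hw_pos : 0 < w (z ^ m⁻¹)) :
    m / (m - n) * (φ * x ^ n * w x + γ * x ^ n) * ((m - n) / m) * z ^ ((m - n) / m - 1) ≤
      φ * w ((z ^ ((m - n) / m)) ^ (1 / (m - n))) + γ := by
  have hm : 0 < m := hn.trans_lt hmn
  have hk : 0 < m - n := sub_pos.2 hmn
  have h_exp : z ^ ((m - n) / m - 1) = (z ^ m⁻¹) ^ (-n) := by
    rw [← Real.rpow_mul hz.le]; congr 1; field_simp; ring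
  have h_coeff : m / (m - n) * (φ * x ^ n * w x + γ * x ^ n) * ((m - n) / m) =
      (φ * w x + γ) * x ^ n := by
    field_simp
  rw [rpow_div_rpow_one_div hz.le hk.ne', h_exp, h_coeff]
  refine mul_rpow_mul_rpow_neg_le hn hx hxz (Real.rpow_pos_of_pos hz _) ?_ (by positivity)
  gcongr
  exact hw_mono hx (Real.rpow_nonneg hz.le _) hxz

theorem sunRHS_bihari (hn : 0 < n) (hmn : n < m) (hc : 0 < c) (hu : ContinuousOn u (Ici 0))
    (hu_nonneg : ∀ s ≥ (0:ℝ), 0 ≤ u s) (hu_le : ∀ s ≥ (0:ℝ), u s ≤ sunRHS m n c u f g w s ^ m⁻¹)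
    (hf : ContinuousOn f (Ici 0)) (hf_nonneg : ∀ s ≥ (0:ℝ), 0 ≤ f s)
    (hg : ContinuousOn g (Ici 0)) (hg_nonneg : ∀ s ≥ (0:ℝ), 0 ≤ g s)
    (hw : ContinuousOn w (Ici 0)) (hw_mono : MonotoneOn w (Ici 0))
    (hw_pos : ∀ x > (0:ℝ), 0 < w x) (hZ_mono : MonotoneOn (sunRHS m n c u f g w) (Ici 0))
    {r : ℝ} (hr : 0 ≤ r) :
    ∫ x in (1:ℝ)..sunRHS m n c u f g w r ^ ((m - n) / m), 1 / w (x ^ (1 / (m - n))) ≤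
      (∫ x in (1:ℝ)..(c + ∫ s in (0:ℝ)..r, g s), 1 / w (x ^ (1 / (m - n)))) +
        ∫ s in (0:ℝ)..r, f s := by
  set Z := sunRHS m n c u f g w
  have hk : 0 < m - n := sub_pos.2 hmn
  have hh := continuousOn_sunIntegrand hn.le hu hu_nonneg hf hg hw
  have hh_Icc : ContinuousOn _ (Icc 0 r) := hh.mono Icc_subset_Ici_self
  have hZ_pos : ∀ s ≥ (0:ℝ), 0 < Z s := fun _ hs => sunRHS_pos hc hZ_mono hs
  have hB0 : Z 0 ^ ((m - n) / m) = c := by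
    rw [show Z 0 = _ from sunRHS_zero, ← Real.rpow_mul hc.le, div_mul_div_cancel₀ hk.ne',
      div_self (hn.trans hmn).ne', Real.rpow_one]
  have := integral_one_div_le_of_hasDerivAt_le (W := fun x => w (x ^ (1 / (m - n))))
    (B := fun s => Z s ^ ((m - n) / m))
    (B' := fun s => m / (m - n) * sunIntegrand n u f g w s * ((m - n) / m) *
      Z s ^ ((m - n) / m - 1)) hr
    (hw.comp_rpow (by positivity)) (fun x hx => hw_pos _ (Real.rpow_pos_of_pos hx _))
    (hw_mono.comp_rpow (by positivity)) (hf.mono Icc_subset_Ici_self)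
    (fun s hs => hf_nonneg s hs.1.le) (hg.mono Icc_subset_Ici_self) (fun s hs => hg_nonneg s hs.1)
    ((continuousOn_const.add (continuousOn_const.mul hh_Icc.continuousOn_primitive_Icc)).rpow_const
      fun s hs => Or.inl (hZ_pos s hs.1).ne')
    (fun s hs => Real.rpow_pos_of_pos (hZ_pos s hs.1) _)
    (fun s hs => (((hh_Icc.hasDerivAt_primitive hs).const_mul _).const_add _).rpow_const
      (Or.inl (hZ_pos s hs.1.le).ne'))
    (fun s hs => sunRHS_rpow_deriv_le hn.le hmn (hZ_pos s hs.1.le) (hu_nonneg s hs.1.le)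
      (hu_le s hs.1.le) (hf_nonneg s hs.1.le) (hg_nonneg s hs.1.le) hw_mono
      (hw_pos _ (Real.rpow_pos_of_pos (hZ_pos s hs.1.le) _)))
  simpa only [hB0] using this

end Sun

/-- `Ψ⁻¹(T)` is encoded as a `y > 0` with `Ψ y = T`. -/
theorem sun_thm21_general (m n c : ℝ) (hmn : n < m) (hn : 0 < n) (hc : 0 < c)
    (u α f g w Ψ : ℝ → ℝ)
    (hu_cont : ContinuousOn u (Ici 0)) (hu_nonneg : ∀ t ≥ (0:ℝ), 0 ≤ u t)
    (hα_nonneg : ∀ t ≥ (0:ℝ), 0 ≤ α t) (hα_le : ∀ t ≥ (0:ℝ), α t ≤ t)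
    (hf_cont : ContinuousOn f (Ici 0)) (hf_nonneg : ∀ s ≥ (0:ℝ), 0 ≤ f s)
    (hg_cont : ContinuousOn g (Ici 0)) (hg_nonneg : ∀ s ≥ (0:ℝ), 0 ≤ g s)
    (hw_cont : ContinuousOn w (Ici 0)) (hw_mono : MonotoneOn w (Ici 0))
    (hw_pos : ∀ x > (0:ℝ), 0 < w x)
    (hΨ : ∀ x, Ψ x = ∫ s in (1:ℝ)..x, 1 / w (s ^ (1 / (m - n))))
    (hmain : ∀ t ≥ (0:ℝ),
      u t ^ m ≤ c ^ (m / (m - n)) + (m / (m - n)) *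
        ∫ s in (0:ℝ)..(α t), (f s * u s ^ n * w (u s) + g s * u s ^ n)) :
    ∃ τ > (0:ℝ), ∀ t ∈ Icc (0:ℝ) τ,
      ∃ y > (0:ℝ),
        Ψ y = Ψ (c + ∫ s in (0:ℝ)..(α t), g s) + (∫ s in (0:ℝ)..(α t), f s) ∧
        u t ≤ y ^ (1 / (m - n)) := by
  obtain rfl : Ψ = fun x => ∫ s in (1:ℝ)..x, 1 / w (s ^ (1 / (m - n))) := funext hΨ
  set Z := sunRHS m n c u f g w
  have hZ_mono : MonotoneOn Z (Ici 0) :=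
    monotoneOn_sunRHS hn.le hmn (continuousOn_sunIntegrand hn.le hu_cont hu_nonneg hf_cont hg_cont
      hw_cont) fun s hs => sunIntegrand_nonneg hn hw_pos (hu_nonneg s hs) (hf_nonneg s hs)
        (hg_nonneg s hs)
  have hu_le : ∀ s ≥ (0:ℝ), ∀ r, u s ^ m ≤ Z r → u s ≤ Z r ^ m⁻¹ := fun s hs r h =>
    (Real.le_rpow_inv_iff_of_pos (hu_nonneg s hs) ((Real.rpow_nonneg (hu_nonneg s hs) m).trans h)
      (hn.trans hmn)).2 h
  have hφ_pos : ∀ x > (0:ℝ), 0 < 1 / w (x ^ (1 / (m - n))) := fun x hx =>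
    one_div_pos.2 (hw_pos _ (Real.rpow_pos_of_pos hx _))
  have hφ : ContinuousOn (fun x => 1 / w (x ^ (1 / (m - n)))) (Ioi 0) :=
    continuousOn_const.div (hw_cont.comp_rpow (by positivity)) fun x hx =>
      (hw_pos _ (Real.rpow_pos_of_pos hx _)).ne'
  obtain ⟨τ, hτ, hτ_lt⟩ := hφ.exists_pos_forall_Icc_integral_lt hφ_pos hf_cont hg_cont hc
  refine ⟨τ, hτ, fun t ht => ?_⟩
  have hαt : α t ∈ Icc 0 τ := ⟨hα_nonneg t ht.1, (hα_le t ht.1).trans ht.2⟩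
  have hZt := sunRHS_pos hc hZ_mono hαt.1
  obtain ⟨y, hy, hΨy⟩ := (hφ.strictMonoOn_integral_Ioi hφ_pos one_pos).monotoneOn.exists_mem_Icc_eq
    (s := Ioi 0)
    (fun x hx => (hφ.hasDerivAt_integral_Ioi one_pos hx).continuousAt.continuousWithinAt)
    (Real.rpow_pos_of_pos hZt _) (by linarith : (0:ℝ) < c + 1)
    (sunRHS_bihari hn hmn hc hu_cont hu_nonneg
      (fun s hs => hu_le s hs s ((hmain s hs).trans (hZ_mono (hα_nonneg s hs) hs (hα_le s hs))))
      hf_cont hf_nonneg hg_cont hg_nonneg hw_cont hw_mono hw_pos hZ_mono hαt.1) (hτ_lt _ hαt)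
  refine ⟨y, (Real.rpow_pos_of_pos hZt _).trans_le hy.1, hΨy, ?_⟩
  calc u t ≤ Z (α t) ^ m⁻¹ := hu_le t ht.1 _ (hmain t ht.1)
    _ = (Z (α t) ^ ((m - n) / m)) ^ (1 / (m - n)) :=
      (rpow_div_rpow_one_div hZt.le (sub_pos.2 hmn).ne').symm
    _ ≤ y ^ (1 / (m - n)) :=
      Real.rpow_le_rpow (by positivity) hy.1 (one_div_nonneg.2 (sub_pos.2 hmn).le)

/-- Sun's Theorem 2.1 (corollary of Theorem 1).  The statement
`Ψ(c + ∫₀^{α t} g) + ∫₀^{α t} f ∈ Dom(Ψ⁻¹)` together with the bound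
`u t ≤ [Ψ⁻¹(…)]^{1/(m-n)}` is expressed as
`∃ y > 0, Ψ y = … ∧ u t ≤ y^{1/(m-n)}`. -/
theorem sun_thm21 (m n c : ℝ) (hmn : n < m) (hn : 0 < n) (hc : 0 < c)
    (u α f g w Ψ : ℝ → ℝ)
    (hu_cont : ContinuousOn u (Ici 0)) (hu_nonneg : ∀ t ≥ (0:ℝ), 0 ≤ u t)
    (hα_C1 : ContDiffOn ℝ 1 α (Ici 0)) (hα_mono : MonotoneOn α (Ici 0))
    (hα_nonneg : ∀ t ≥ (0:ℝ), 0 ≤ α t) (hα_le : ∀ t ≥ (0:ℝ), α t ≤ t)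
    (hf_cont : ContinuousOn f (Ici 0)) (hf_nonneg : ∀ s ≥ (0:ℝ), 0 ≤ f s)
    (hg_cont : ContinuousOn g (Ici 0)) (hg_nonneg : ∀ s ≥ (0:ℝ), 0 ≤ g s)
    (hw_cont : ContinuousOn w (Ici 0)) (hw_mono : MonotoneOn w (Ici 0))
    (hw_pos : ∀ x > (0:ℝ), 0 < w x)
    (hΨ : ∀ x, Ψ x = ∫ s in (1:ℝ)..x, 1 / w (s ^ (1 / (m - n))))
    (hmain : ∀ t ≥ (0:ℝ),
      u t ^ m ≤ c ^ (m / (m - n)) + (m / (m - n)) *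
        ∫ s in (0:ℝ)..(α t), (f s * u s ^ n * w (u s) + g s * u s ^ n)) :
    ∃ τ > (0:ℝ), ∀ t ∈ Icc (0:ℝ) τ,
      ∃ y > (0:ℝ),
        Ψ y = Ψ (c + ∫ s in (0:ℝ)..(α t), g s) + (∫ s in (0:ℝ)..(α t), f s) ∧
        u t ≤ y ^ (1 / (m - n)) :=
  sun_thm21_general m n c hmn hn hc u α f g w Ψ hu_cont hu_nonneg hα_nonneg hα_le hf_cont hf_nonneg
    hg_cont hg_nonneg hw_cont hw_mono hw_pos hΨ hmain
end

section
/- Let n > 0, c > 0, 0 < x₀ < c, let u : [0,∞) → [0,∞) be continuous, let α ∈ C¹([0,∞),[0,∞)) be nondecreasing with α(t) ≤ t, let f : [0,∞)×[0,∞) → [0,∞) be continuous and nondecreasing in its first variable, and let w : [0,∞) → [0,∞) be continuous nondecreasing with w(x) > 0 for x > 0. Suppose uⁿ(t) ≤ c + ∫_0^{α(t)} f(t,s)(uⁿ(s)+1)ln(uⁿ(s)+1) w(u(s)) ds for all t ≥ 0. Define G(x) = ∫_{x₀}^x ds/((s+1)ln(s+1)) and Ψ(x) = ∫_1^x ds/w((exp(eˢ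 ln(x₀+1)) − 1)^{1/n}). Then there exists τ > 0 such that for all t ∈ [0,τ], Ψ(G(c)) + ∫_0^{α(t)} f(t,s) ds lies in the domain of Ψ⁻¹ and u(t) ≤ [G⁻¹(Ψ⁻¹(Ψ(G(c)) + ∫_0^{α(t)} f(t,s) ds))]^{1/n}. -/
/-!
Put `q = uⁿ` and `θ(x) = (x + 1) ln(x + 1) w(x^{1/n})`, so that the hypothesis reads
`q t ≤ c + ∫₀^{α t} f(t,s) θ(q s) ds`. Fix `T` and freeze the kernel at `f(T, ·)`, which only
enlarges the right-hand side `z t` for `t ≤ T`. Since `α t ≤ t` and `z` is nondecreasing,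
`z' = f(T, α t) θ(q (α t)) α' ≤ f(T, α t) α' θ(z t)`, so `Φ ∘ z - ∫₀^{α ·} f(T,s) ds` is antitone
for every antiderivative `Φ` of `1/θ` (Bihari's argument). By the chain rule `Ψ ∘ G` is such an
antiderivative, whence `Ψ(G(q T)) ≤ Ψ(G c) + ∫₀^{α T} f(T,s) ds`. For small `T` the right-hand
side stays in the range of the strictly increasing `Ψ`, and inverting `Ψ`, `G` and `xⁿ` in turn
gives the bound.
-/

open Set intervalIntegral Real

section Bihari

variable {θ Φ z z' H H' k q α : ℝ → ℝ} {a b c T : ℝ}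

theorem sub_le_sub_of_hasDerivAt_le_mul (hab : a ≤ b)
    (hΦ : ∀ t ∈ Icc a b, HasDerivAt Φ (θ (z t))⁻¹ (z t)) (hθ : ∀ t ∈ Icc a b, 0 < θ (z t))
    (hz : ContinuousOn z (Icc a b)) (hH : ContinuousOn H (Icc a b))
    (hz' : ∀ t ∈ Ioo a b, HasDerivAt z (z' t) t) (hH' : ∀ t ∈ Ioo a b, HasDerivAt H (H' t) t)
    (hle : ∀ t ∈ Ioo a b, z' t ≤ H' t * θ (z t)) :
    Φ (z b) - Φ (z a) ≤ H b - H a := by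
  have hanti : AntitoneOn (fun t => Φ (z t) - H t) (Icc a b) := by
    refine antitoneOn_of_hasDerivWithinAt_nonpos (convex_Icc a b)
      ((show ContinuousOn (fun t => Φ (z t)) (Icc a b) from fun t ht =>
        (hΦ t ht).continuousAt.comp_continuousWithinAt (hz t ht)).sub hH)
      (f' := fun t => (θ (z t))⁻¹ * z' t - H' t) (fun t ht => ?_) (fun t ht => ?_) <;>
      rw [interior_Icc] at ht
    · exact (((hΦ t (Ioo_subset_Icc_self ht)).comp t (hz' t ht)).sub (hH' t ht)).hasDerivWithinAt
    · rw [sub_nonpos, inv_mul_le_iff₀ (hθ t (Ioo_subset_Icc_self ht)), mul_comm]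
      exact hle t ht
  linarith [hanti (left_mem_Icc.2 hab) (right_mem_Icc.2 hab) hab]

theorem integral_comp_max_zero (g : ℝ → ℝ) (ha : 0 ≤ a) :
    ∫ s in 0..a, g (max s 0) = ∫ s in 0..a, g s :=
  integral_congr fun s hs => by
    rw [uIcc_of_le ha] at hs
    rw [max_eq_left hs.1]

theorem hasDerivAt_integral_comp_max_zero {g : ℝ → ℝ} (hg : ContinuousOn g (Ici 0)) (x : ℝ) :
    HasDerivAt (fun y => ∫ s in 0..y, g (max s 0)) (g (max x 0)) x :=
  ((hg.comp_continuous (continuous_id.max continuous_const) fun s => le_max_right s 0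
    ).integral_hasStrictDerivAt 0 x).hasDerivAt

theorem bihari_le_of_le_add_integral (hc : 0 < c) (hT : 0 ≤ T)
    (hθ : ContinuousOn θ (Ici 0)) (hθ_mono : MonotoneOn θ (Ici 0))
    (hθ_nonneg : ∀ x ≥ 0, 0 ≤ θ x) (hθ_pos : ∀ x > 0, 0 < θ x)
    (hΦ : ∀ x > 0, HasDerivAt Φ (θ x)⁻¹ x)
    (hk : ContinuousOn k (Ici 0)) (hk_nonneg : ∀ s ≥ 0, 0 ≤ k s)
    (hq : ContinuousOn q (Ici 0)) (hq_nonneg : ∀ s ≥ 0, 0 ≤ q s)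
    (hα : ContinuousOn α (Icc 0 T)) (hα_diff : DifferentiableOn ℝ α (Ioo 0 T))
    (hα_mono : MonotoneOn α (Icc 0 T)) (hα0 : α 0 = 0) (hα_le : ∀ t ∈ Icc 0 T, α t ≤ t)
    (hq_le : ∀ t ∈ Icc 0 T, q t ≤ c + ∫ s in 0..α t, k s * θ (q s)) :
    Φ (c + ∫ s in 0..α T, k s * θ (q s)) ≤ Φ c + ∫ s in 0..α T, k s := by
  have hα_mem : ∀ t ∈ Icc 0 T, α t ∈ Icc 0 T := fun t ht =>
    ⟨hα0 ▸ hα_mono (left_mem_Icc.2 hT) ht ht.1, (hα_le t ht).trans ht.2⟩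
  -- clamped at `0`, the integrands become continuous on `ℝ`, so that `Z` and `K` are
  -- differentiable also at the points where `α` vanishes
  set Z : ℝ → ℝ := fun x => ∫ s in 0..x, k (max s 0) * θ (q (max s 0))
  set K : ℝ → ℝ := fun x => ∫ s in 0..x, k (max s 0)
  have hZ : ∀ x, HasDerivAt Z (k (max x 0) * θ (q (max x 0))) x :=
    hasDerivAt_integral_comp_max_zero (g := fun s => k s * θ (q s))
      (hk.mul (hθ.comp hq hq_nonneg))
  have hK : ∀ x, HasDerivAt K (k (max x 0)) x := hasDerivAt_integral_comp_max_zero hk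
  have hZ_mono : Monotone Z := monotone_of_hasDerivAt_nonneg hZ fun s =>
    mul_nonneg (hk_nonneg _ (le_max_right _ _)) (hθ_nonneg _ (hq_nonneg _ (le_max_right _ _)))
  set z : ℝ → ℝ := fun t => c + Z (α t)
  have hz_ge : ∀ t ∈ Icc 0 T, c ≤ z t := fun t ht =>
    le_add_of_nonneg_right (by simpa [Z] using hZ_mono (hα_mem t ht).1)
  have hq_le_z : ∀ t ∈ Icc 0 T, q t ≤ z t := fun t ht => by
    simpa only [z, Z, integral_comp_max_zero (fun s => k s * θ (q s)) (hα_mem t ht).1]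
      using hq_le t ht
  have hα' : ∀ t ∈ Ioo 0 T, HasDerivAt α (deriv α t) t := fun t ht =>
    (hα_diff.differentiableAt (isOpen_Ioo.mem_nhds ht)).hasDerivAt
  have key := sub_le_sub_of_hasDerivAt_le_mul (Φ := Φ) (θ := θ) (z := z) (H := fun t => K (α t))
    hT (fun t ht => hΦ _ (hc.trans_le (hz_ge t ht)))
    (fun t ht => hθ_pos _ (hc.trans_le (hz_ge t ht)))
    (continuousOn_const.add
      ((continuous_iff_continuousAt.2 fun x => (hZ x).continuousAt).comp_continuousOn hα))
    ((continuous_iff_continuousAt.2 fun x => (hK x).continuousAt).comp_continuousOn hα)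
    (fun t ht => ((hZ (α t)).comp t (hα' t ht)).const_add c)
    (fun t ht => (hK (α t)).comp t (hα' t ht)) fun t ht => ?_
  · have hαT := (hα_mem T (right_mem_Icc.2 hT)).1
    simp only [z, Z, K, hα0, integral_same, add_zero, sub_zero,
      integral_comp_max_zero (fun s => k s * θ (q s)) hαT, integral_comp_max_zero k hαT] at key
    linarith
  · have ht' := Ioo_subset_Icc_self ht
    have hαt := hα_mem t ht'
    have hα't : 0 ≤ deriv α t := by
      rw [← derivWithin_of_mem_nhds (Icc_mem_nhds ht.1 ht.2)]
      exact hα_mono.derivWithin_nonneg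
    have hθ_le : θ (q (α t)) ≤ θ (z t) :=
      hθ_mono (hq_nonneg _ hαt.1) (hc.le.trans (hz_ge t ht')) <| (hq_le_z _ hαt).trans <|
        add_le_add_right (hZ_mono (hα_mono hαt ht' (hα_le t ht'))) c
    simp only [max_eq_left hαt.1]
    calc k (α t) * θ (q (α t)) * deriv α t = k (α t) * deriv α t * θ (q (α t)) := by ring
      _ ≤ k (α t) * deriv α t * θ (z t) :=
        mul_le_mul_of_nonneg_left hθ_le (mul_nonneg (hk_nonneg _ hαt.1) hα't)

theorem exists_bihari_bound {f : ℝ → ℝ → ℝ} (hc : 0 < c) (hT : 0 ≤ T)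
    (hθ : ContinuousOn θ (Ici 0)) (hθ_mono : MonotoneOn θ (Ici 0))
    (hθ_nonneg : ∀ x ≥ 0, 0 ≤ θ x) (hθ_pos : ∀ x > 0, 0 < θ x)
    (hΦ : ∀ x > 0, HasDerivAt Φ (θ x)⁻¹ x)
    (hq : ContinuousOn q (Ici 0)) (hq_nonneg : ∀ s ≥ 0, 0 ≤ q s)
    (hα_C1 : ContDiffOn ℝ 1 α (Ici 0)) (hα_mono : MonotoneOn α (Ici 0))
    (hα_nonneg : ∀ t ≥ 0, 0 ≤ α t) (hα_le : ∀ t ≥ 0, α t ≤ t)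
    (hf_cont : ContinuousOn (Function.uncurry f) (Ici 0 ×ˢ Ici 0))
    (hf_nonneg : ∀ t ≥ 0, ∀ s ≥ 0, 0 ≤ f t s)
    (hf_mono : ∀ s ≥ 0, MonotoneOn (fun t => f t s) (Ici 0))
    (hq_le : ∀ t ≥ 0, q t ≤ c + ∫ s in 0..α t, f t s * θ (q s)) :
    ∃ x ≥ c, q T ≤ x ∧ Φ x ≤ Φ c + ∫ s in 0..α T, f T s := by
  have hf_sec : ∀ t ≥ 0, ContinuousOn (f t) (Ici 0) := fun t ht =>
    hf_cont.comp (continuous_const.prodMk continuous_id).continuousOn fun s hs => ⟨ht, hs⟩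
  have hkernel_int : ∀ t ≥ 0, ∀ a ≥ 0,
      IntervalIntegrable (fun s => f t s * θ (q s)) MeasureTheory.volume 0 a :=
    fun t ht a ha => ContinuousOn.intervalIntegrable <|
      ((hf_sec t ht).mul (hθ.comp hq hq_nonneg)).mono <| by
        rw [uIcc_of_le ha]; exact Icc_subset_Ici_self
  have hq_le_T : ∀ t ∈ Icc 0 T, q t ≤ c + ∫ s in 0..α t, f T s * θ (q s) := fun t ht =>
    (hq_le t ht.1).trans <| add_le_add_right (integral_mono_on (hα_nonneg t ht.1)
      (hkernel_int t ht.1 _ (hα_nonneg t ht.1)) (hkernel_int T hT _ (hα_nonneg t ht.1)) fun s hs =>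
        mul_le_mul_of_nonneg_right (hf_mono s hs.1 ht.1 hT ht.2) (hθ_nonneg _ (hq_nonneg s hs.1))) c
  refine ⟨_, le_add_of_nonneg_right ?_, hq_le T hT,
    bihari_le_of_le_add_integral hc hT hθ hθ_mono hθ_nonneg hθ_pos hΦ (hf_sec T hT)
      (hf_nonneg T hT) hq hq_nonneg (hα_C1.continuousOn.mono Icc_subset_Ici_self)
      ((hα_C1.differentiableOn one_ne_zero).mono (Ioo_subset_Icc_self.trans Icc_subset_Ici_self))
      (hα_mono.mono Icc_subset_Ici_self) (le_antisymm (hα_le 0 le_rfl) (hα_nonneg 0 le_rfl))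
      (fun t ht => hα_le t ht.1) hq_le_T⟩
  exact integral_nonneg (hα_nonneg T hT) fun s hs =>
    mul_nonneg (hf_nonneg T hT s hs.1) (hθ_nonneg _ (hq_nonneg s hs.1))

theorem exists_pos_forall_integral_le {f : ℝ → ℝ → ℝ}
    (hf_cont : ContinuousOn (Function.uncurry f) (Ici 0 ×ˢ Ici 0))
    (hα_nonneg : ∀ t ≥ 0, 0 ≤ α t) (hα_le : ∀ t ≥ 0, α t ≤ t) {ε : ℝ} (hε : 0 < ε) :
    ∃ τ > 0, ∀ t ∈ Icc 0 τ, ∫ s in 0..α t, f t s ≤ ε := by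
  obtain ⟨M, hM⟩ := (isCompact_Icc.prod isCompact_Icc).exists_bound_of_continuousOn
    (hf_cont.mono (prod_mono Icc_subset_Ici_self Icc_subset_Ici_self) :
      ContinuousOn (Function.uncurry f) (Icc (0 : ℝ) 1 ×ˢ Icc 0 1))
  have hM0 : 0 ≤ M :=
    (norm_nonneg _).trans (hM (0, 0) ⟨left_mem_Icc.2 zero_le_one, left_mem_Icc.2 zero_le_one⟩)
  refine ⟨min 1 (ε / (M + 1)), by positivity, fun t ht => ?_⟩
  have ht1 : t ≤ 1 := ht.2.trans (min_le_left _ _)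
  have hαt : α t ∈ Icc 0 t := ⟨hα_nonneg t ht.1, hα_le t ht.1⟩
  have hbound : ‖∫ s in 0..α t, f t s‖ ≤ M * |α t - 0| :=
    norm_integral_le_of_norm_le_const fun s hs => by
      rw [uIoc_of_le hαt.1] at hs
      exact hM (t, s) ⟨⟨ht.1, ht1⟩, hs.1.le, hs.2.trans (hαt.2.trans ht1)⟩
  calc ∫ s in 0..α t, f t s ≤ M * |α t - 0| := (le_abs_self _).trans hbound
    _ ≤ M * (ε / (M + 1)) := by
        rw [sub_zero, abs_of_nonneg hαt.1]
        exact mul_le_mul_of_nonneg_left (hαt.2.trans (ht.2.trans (min_le_right _ _))) hM0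
    _ ≤ ε := by
        rw [mul_div_assoc']
        exact div_le_of_le_mul₀ (by positivity) hε.le (by nlinarith)

end Bihari

/-- `θ(x) = η(φ⁻¹ x) w(φ⁻¹ x)` for `φ(x) = xⁿ` and `η(x) = (xⁿ + 1) ln(xⁿ + 1)`. -/
noncomputable def logWeight (n : ℝ) (w : ℝ → ℝ) (x : ℝ) : ℝ :=
  (x + 1) * log (x + 1) * w (x ^ (1 / n))

section LogWeight

variable {n : ℝ} {w : ℝ → ℝ}

theorem logWeight_pos (hw_pos : ∀ x > 0, 0 < w x) {x : ℝ} (hx : 0 < x) :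
    0 < logWeight n w x := by
  have := Real.log_pos (by linarith : 1 < x + 1)
  have := hw_pos _ (rpow_pos_of_pos hx (1 / n))
  unfold logWeight
  positivity

theorem logWeight_nonneg (hw_pos : ∀ x > 0, 0 < w x) {x : ℝ} (hx : 0 ≤ x) :
    0 ≤ logWeight n w x := by
  rcases hx.eq_or_lt with rfl | hx
  · simp [logWeight]
  · exact (logWeight_pos hw_pos hx).le

theorem monotoneOn_logWeight (hn : 0 < n) (hw_mono : MonotoneOn w (Ici 0))
    (hw_pos : ∀ x > 0, 0 < w x) : MonotoneOn (logWeight n w) (Ici 0) := by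
  intro x hx y hy hxy
  rcases (show (0 : ℝ) ≤ x from hx).eq_or_lt with rfl | hx0
  · simpa [logWeight] using logWeight_nonneg hw_pos hy
  have hxy' : x ^ (1 / n) ≤ y ^ (1 / n) := rpow_le_rpow hx0.le hxy (by positivity)
  have := Real.log_pos (by linarith : 1 < x + 1)
  have := hw_pos _ (rpow_pos_of_pos hx0 (1 / n))
  exact mul_le_mul (by gcongr; linarith)
    (hw_mono (rpow_nonneg hx0.le _) (rpow_nonneg (hx0.le.trans hxy) _) hxy') this.le
    (mul_nonneg (by linarith) (Real.log_nonneg (by linarith)))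

theorem continuousOn_logWeight (hn : 0 < n) (hw_cont : ContinuousOn w (Ici 0)) :
    ContinuousOn (logWeight n w) (Ici 0) := by
  have hpos : ∀ x ∈ Ici (0 : ℝ), x + 1 ≠ 0 := fun x (hx : 0 ≤ x) => by positivity
  exact ((continuousOn_id.add continuousOn_const).mul
    ((continuousOn_id.add continuousOn_const).log hpos)).mul
    (hw_cont.comp (continuousOn_id.rpow_const fun _ _ => Or.inr (by positivity))
      fun x (hx : 0 ≤ x) => rpow_nonneg hx _)

theorem logWeight_rpow (hn : n ≠ 0) {u : ℝ} (hu : 0 ≤ u) :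
    logWeight n w (u ^ n) = (u ^ n + 1) * log (u ^ n + 1) * w u := by
  rw [logWeight, ← rpow_mul hu, mul_one_div_cancel hn, rpow_one]

end LogWeight

/-- The function `G` of the corollary. -/
noncomputable def logGauge (x₀ x : ℝ) : ℝ :=
  ∫ s in x₀..x, 1 / ((s + 1) * log (s + 1))

/-- The explicit inverse `G⁻¹` of `logGauge x₀`. -/
noncomputable def logGaugeInv (x₀ y : ℝ) : ℝ :=
  exp (exp y * log (x₀ + 1)) - 1

section LogGauge

variable {x₀ x y : ℝ}

theorem hasDerivAt_log_log_add_one (hx : 0 < x) :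
    HasDerivAt (fun y => log (log (y + 1))) (1 / ((x + 1) * log (x + 1))) x := by
  have hlog : log (x + 1) ≠ 0 := (Real.log_pos (by linarith)).ne'
  have h : HasDerivAt (fun y => log (y + 1)) (1 / (x + 1)) x := by
    simpa using ((hasDerivAt_id' x).add_const 1).log (by linarith)
  convert h.log hlog using 1
  field_simp

theorem logGauge_eq (hx₀ : 0 < x₀) (hx : 0 < x) :
    logGauge x₀ x = log (log (x + 1)) - log (log (x₀ + 1)) := by
  have hpos : ∀ s ∈ uIcc x₀ x, 0 < s := fun s hs => (lt_min hx₀ hx).trans_le hs.1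
  refine integral_eq_sub_of_hasDerivAt (fun s hs => hasDerivAt_log_log_add_one (hpos s hs))
    (ContinuousOn.intervalIntegrable fun s hs => ?_)
  have hs := hpos s hs
  have hlog : log (s + 1) ≠ 0 := (Real.log_pos (by linarith)).ne'
  have h : ContinuousAt (fun s : ℝ => s + 1) s := by fun_prop
  exact (continuousAt_const.div (h.mul (h.log (by linarith)))
    (mul_ne_zero (by linarith) hlog)).continuousWithinAt

theorem hasDerivAt_logGauge (hx₀ : 0 < x₀) (hx : 0 < x) :
    HasDerivAt (logGauge x₀) (1 / ((x + 1) * log (x + 1))) x :=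
  ((hasDerivAt_log_log_add_one hx).sub_const _).congr_of_eventuallyEq <|
    Filter.eventually_of_mem (Ioi_mem_nhds hx) fun _ hy => logGauge_eq hx₀ hy

theorem logGauge_pos (hx₀ : 0 < x₀) (hx₀x : x₀ < x) : 0 < logGauge x₀ x := by
  rw [logGauge_eq hx₀ (hx₀.trans hx₀x), sub_pos]
  exact Real.log_lt_log (Real.log_pos (by linarith))
    (Real.log_lt_log (by linarith) (by linarith))

theorem logGaugeInv_pos (hx₀ : 0 < x₀) (y : ℝ) : 0 < logGaugeInv x₀ y := by
  have := Real.log_pos (by linarith : 1 < x₀ + 1)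
  rw [logGaugeInv, sub_pos, one_lt_exp_iff]
  exact mul_pos (exp_pos y) this

theorem logGaugeInv_logGauge (hx₀ : 0 < x₀) (hx : 0 < x) :
    logGaugeInv x₀ (logGauge x₀ x) = x := by
  have hL := Real.log_pos (by linarith : 1 < x₀ + 1)
  rw [logGaugeInv, logGauge_eq hx₀ hx, exp_sub, exp_log (Real.log_pos (by linarith)), exp_log hL,
    div_mul_cancel₀ _ hL.ne', exp_log (by linarith), add_sub_cancel_right]

theorem le_logGaugeInv_of_logGauge_le (hx₀ : 0 < x₀) (hx : 0 < x) (h : logGauge x₀ x ≤ y) :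
    x ≤ logGaugeInv x₀ y := by
  have hL := Real.log_pos (by linarith : 1 < x₀ + 1)
  rw [← logGaugeInv_logGauge hx₀ hx, logGaugeInv, logGaugeInv]
  gcongr

theorem le_logGaugeInv_rpow {n u : ℝ} (hn : 0 < n) (hx₀ : 0 < x₀) (hx : 0 < x) (hu : 0 ≤ u)
    (hux : u ^ n ≤ x) (hxy : logGauge x₀ x ≤ y) : u ≤ logGaugeInv x₀ y ^ (1 / n) :=
  calc u = (u ^ n) ^ (1 / n) := by rw [← rpow_mul hu, mul_one_div_cancel hn.ne', rpow_one]
    _ ≤ x ^ (1 / n) := rpow_le_rpow (rpow_nonneg hu n) hux (by positivity)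
    _ ≤ logGaugeInv x₀ y ^ (1 / n) :=
        rpow_le_rpow hx.le (le_logGaugeInv_of_logGauge_le hx₀ hx hxy) (by positivity)

end LogGauge

section Psi

variable {n x₀ : ℝ} {w Ψ : ℝ → ℝ}

theorem hasDerivAt_integral_one_div_comp_logGaugeInv (hx₀ : 0 < x₀)
    (hw_cont : ContinuousOn w (Ici 0)) (hw_pos : ∀ x > 0, 0 < w x) (y : ℝ) :
    HasDerivAt (fun x => ∫ s in (1 : ℝ)..x, 1 / w (logGaugeInv x₀ s ^ (1 / n)))
      (1 / w (logGaugeInv x₀ y ^ (1 / n))) y := by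
  have hpos : ∀ s, 0 < logGaugeInv x₀ s ^ (1 / n) := fun s =>
    rpow_pos_of_pos (logGaugeInv_pos hx₀ s) _
  have hv : Continuous fun s => logGaugeInv x₀ s ^ (1 / n) :=
    (show Continuous (logGaugeInv x₀) by unfold logGaugeInv; fun_prop).rpow_const
      fun s => Or.inl (logGaugeInv_pos hx₀ s).ne'
  exact ((continuous_const.div (hw_cont.comp_continuous hv fun s => (hpos s).le)
    fun s => (hw_pos _ (hpos s)).ne').integral_hasStrictDerivAt 1 y).hasDerivAt

theorem hasDerivAt_comp_logGauge (hx₀ : 0 < x₀)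
    (hΨ : ∀ y, HasDerivAt Ψ (1 / w (logGaugeInv x₀ y ^ (1 / n))) y) {x : ℝ} (hx : 0 < x) :
    HasDerivAt (fun x => Ψ (logGauge x₀ x)) (logWeight n w x)⁻¹ x := by
  refine ((hΨ (logGauge x₀ x)).comp x (hasDerivAt_logGauge hx₀ hx)).congr_deriv ?_
  rw [logGaugeInv_logGauge hx₀ hx, logWeight]
  simp only [one_div, mul_inv]
  ring

end Psi

/-- Second corollary of Theorem 1, with `φ(x) = xⁿ` and
`η(x) = (xⁿ+1)ln(xⁿ+1)`.  Here `G⁻¹(y) = exp(eʸ ln(x₀+1)) − 1` is explicit;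
membership of `Ψ(G(c)) + ∫₀^{α t} f(t,s) ds` in `Dom(Ψ⁻¹)` and the bound
`u t ≤ [G⁻¹(Ψ⁻¹(…))]^{1/n}` are expressed via `∃ y > 0, Ψ y = …`. -/
theorem corollary_log (n c x₀ : ℝ) (hn : 0 < n) (hx₀ : 0 < x₀) (hx₀c : x₀ < c)
    (u α w G Ψ : ℝ → ℝ) (f : ℝ → ℝ → ℝ)
    (hu_cont : ContinuousOn u (Ici 0)) (hu_nonneg : ∀ t ≥ (0:ℝ), 0 ≤ u t)
    (hα_C1 : ContDiffOn ℝ 1 α (Ici 0)) (hα_mono : MonotoneOn α (Ici 0))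
    (hα_nonneg : ∀ t ≥ (0:ℝ), 0 ≤ α t) (hα_le : ∀ t ≥ (0:ℝ), α t ≤ t)
    (hf_cont : ContinuousOn (Function.uncurry f) (Ici 0 ×ˢ Ici 0))
    (hf_nonneg : ∀ t ≥ (0:ℝ), ∀ s ≥ (0:ℝ), 0 ≤ f t s)
    (hf_mono : ∀ s ≥ (0:ℝ), MonotoneOn (fun t => f t s) (Ici 0))
    (hw_cont : ContinuousOn w (Ici 0)) (hw_mono : MonotoneOn w (Ici 0))
    (hw_pos : ∀ x > (0:ℝ), 0 < w x)
    (hG : ∀ x, G x = ∫ s in x₀..x, 1 / ((s + 1) * Real.log (s + 1)))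
    (hΨ : ∀ x, Ψ x = ∫ s in (1:ℝ)..x,
      1 / w ((Real.exp (Real.exp s * Real.log (x₀ + 1)) - 1) ^ (1 / n)))
    (hmain : ∀ t ≥ (0:ℝ),
      u t ^ n ≤ c + ∫ s in (0:ℝ)..(α t),
        f t s * (u s ^ n + 1) * Real.log (u s ^ n + 1) * w (u s)) :
    ∃ τ > (0:ℝ), ∀ t ∈ Icc (0:ℝ) τ,
      ∃ y > (0:ℝ),
        Ψ y = Ψ (G c) + (∫ s in (0:ℝ)..(α t), f t s) ∧
        u t ≤ (Real.exp (Real.exp y * Real.log (x₀ + 1)) - 1) ^ (1 / n) := by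
  obtain rfl : G = logGauge x₀ := funext hG
  have hc : 0 < c := hx₀.trans hx₀c
  have hΨ' : ∀ y, HasDerivAt Ψ (1 / w (logGaugeInv x₀ y ^ (1 / n))) y := by
    rw [funext hΨ]
    exact hasDerivAt_integral_one_div_comp_logGaugeInv hx₀ hw_cont hw_pos
  have hΨ_mono := strictMono_of_hasDerivAt_pos hΨ' fun y =>
    one_div_pos.2 (hw_pos _ (rpow_pos_of_pos (logGaugeInv_pos hx₀ y) _))
  have hq_le : ∀ t ≥ 0, u t ^ n ≤ c + ∫ s in 0..α t, f t s * logWeight n w (u s ^ n) :=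
    fun t ht => (hmain t ht).trans_eq <| congrArg (c + ·) <| integral_congr fun s hs => by
      rw [uIcc_of_le (hα_nonneg t ht)] at hs
      rw [logWeight_rpow hn.ne' (hu_nonneg s hs.1)]
      ring
  -- small enough that `Ψ (G c) + ∫ f` stays in `Ψ '' Icc (G c) (G c + 1)`
  obtain ⟨τ, hτ, hI⟩ := exists_pos_forall_integral_le hf_cont hα_nonneg hα_le
    (sub_pos.2 (hΨ_mono (lt_add_one (logGauge x₀ c))))
  refine ⟨τ, hτ, fun t ht => ?_⟩
  obtain ⟨x, hcx, hux, hΦx⟩ := exists_bihari_bound hc ht.1 (continuousOn_logWeight hn hw_cont)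
    (monotoneOn_logWeight hn hw_mono hw_pos) (fun _ => logWeight_nonneg hw_pos)
    (fun _ => logWeight_pos hw_pos) (fun _ => hasDerivAt_comp_logGauge hx₀ hΨ')
    (hu_cont.rpow_const fun _ _ => Or.inr hn.le) (fun s hs => rpow_nonneg (hu_nonneg s hs) n)
    hα_C1 hα_mono hα_nonneg hα_le hf_cont hf_nonneg hf_mono hq_le
  have hI_nonneg : 0 ≤ ∫ s in 0..α t, f t s :=
    integral_nonneg (hα_nonneg t ht.1) fun s hs => hf_nonneg t ht.1 s hs.1
  obtain ⟨y, hy, hΨy⟩ := intermediate_value_Icc (le_add_of_nonneg_right zero_le_one)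
    (continuous_iff_continuousAt.2 fun y => (hΨ' y).continuousAt).continuousOn
    ⟨le_add_of_nonneg_right hI_nonneg, by linarith [hI t ht]⟩
  exact ⟨y, (logGauge_pos hx₀ hx₀c).trans_le hy.1, hΨy, le_logGaugeInv_rpow hn hx₀
    (hc.trans_le hcx) (hu_nonneg t ht.1) hux (hΨ_mono.le_iff_le.1 (hΦx.trans hΨy.ge))⟩
end
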